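/- arXiv:1503.02746 — 5 statements merged into one kernel-verified Lean document; each statement's English description precedes it below -/
import Mathlib

section
/- For every real ε > 0 there exists a real δ > 0 such that the following holds: if G is a distance-regular graph with degree k ≥ 1, such that adjacent vertices have exactly λ ≥ 1 common neighbors and vertices at distance 2 have exactly μ ≥ 1 common neighbors, and the least eigenvalue s of the real adjacency matrix of G satisfies |s|·μ ≤ δ·λ, then G has a clique geometry all of whose members have order between (1 − ε)·k/|s| and (1 + ε)·k/|s|. -/
open Finset

/-- A connected graph is *distance-regular* with intersection arrays `b`, `c` if, whenever
`u, v` are vertices at distance `i`, the vertex `v` has exactly `b i` neighbors at distance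
`i + 1` from `u` and exactly `c i` neighbors at distance `i - 1` from `u`. -/
def IsDistanceRegular {V : Type*} [Fintype V] [DecidableEq V] (G : SimpleGraph V)
    [DecidableRel G.Adj] (b c : ℕ → ℕ) : Prop :=
  G.Connected ∧
    ∀ u v : V, ∀ i : ℕ, G.dist u v = i →
      ((G.neighborFinset v).filter fun w => G.dist u w = i + 1).card = b i ∧
      ((G.neighborFinset v).filter fun w => G.dist u w = i - 1).card = c i

/-- `θ` is an eigenvalue of the real adjacency matrix of `G`. -/
def IsAdjEigenvalue {V : Type*} [Fintype V] [DecidableEq V] (G : SimpleGraph V)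
    [DecidableRel G.Adj] (θ : ℝ) : Prop :=
  ∃ x : V → ℝ, x ≠ 0 ∧ (G.adjMatrix ℝ).mulVec x = θ • x

/-- A clique (given as a finset) is a *maximal clique* if it is not properly contained in any
other clique. -/
def IsMaximalClique {V : Type*} (G : SimpleGraph V) (c : Finset V) : Prop :=
  G.IsClique (c : Set V) ∧ ∀ d : Finset V, G.IsClique (d : Set V) → c ⊆ d → c = d

/-- A *clique geometry* of `G` is a collection of cliques, all maximal, such that every pair of
adjacent vertices belongs to exactly one member of the collection. -/
def IsCliqueGeometry {V : Type*} (G : SimpleGraph V) (C : Set (Finset V)) : Prop :=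
  (∀ c ∈ C, IsMaximalClique G c) ∧
    ∀ u v : V, G.Adj u v → ∃! c, c ∈ C ∧ u ∈ c ∧ v ∈ c

section gluedaux
open Matrix
set_option linter.unusedSectionVars false
set_option maxHeartbeats 1000000
set_option linter.unnecessarySeqFocus false
set_option linter.deprecated false

lemma rayleigh {V : Type*} [Fintype V] [DecidableEq V] (G : SimpleGraph V)
    [DecidableRel G.Adj] (s : ℝ) (hmin : ∀ θ : ℝ, IsAdjEigenvalue G θ → s ≤ θ) :
    ∀ y : V → ℝ, s * (y ⬝ᵥ y) ≤ y ⬝ᵥ (G.adjMatrix ℝ).mulVec y := by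
  intro y
  set A := G.adjMatrix ℝ with hAdef
  have hA : A.IsHermitian := by
    have h := G.isSymm_adjMatrix (α := ℝ)
    rwa [Matrix.IsHermitian, conjTranspose_eq_transpose_of_trivial]
  set M : Matrix V V ℝ := A - s • (1 : Matrix V V ℝ) with hMdef
  have hM : M.IsHermitian := by
    rw [Matrix.IsHermitian, hMdef, conjTranspose_sub, conjTranspose_smul,
      conjTranspose_one, hA, star_trivial]
  have hMv : ∀ x : V → ℝ, M.mulVec x = A.mulVec x - s • x := by
    intro x
    simp [hMdef, Matrix.sub_mulVec, Matrix.smul_mulVec, Matrix.one_mulVec]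
  have heig : ∀ i : V, 0 ≤ hM.eigenvalues i := by
    intro i
    have hv := hM.mulVec_eigenvectorBasis i
    set v : V → ℝ := ⇑(hM.eigenvectorBasis i) with hvdef
    have hvne : v ≠ 0 := by
      intro h0
      have hz : hM.eigenvectorBasis i = 0 := by
        apply PiLp.ext
        intro j
        exact congrFun h0 j
      exact (hM.eigenvectorBasis.toBasis.ne_zero i) (by simpa using hz)
    have hAv : A.mulVec v = (hM.eigenvalues i + s) • v := by
      have h1 : A.mulVec v - s • v = hM.eigenvalues i • v := by
        rw [← hMv v, hv]
      have h2 : A.mulVec v = hM.eigenvalues i • v + s • v := by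
        rw [← h1]; abel
      rw [h2, ← add_smul]
    have := hmin _ ⟨v, hvne, hAv⟩
    linarith
  have hpsd : M.PosSemidef := hM.posSemidef_iff_eigenvalues_nonneg.mpr heig
  have hq := hpsd.dotProduct_mulVec_nonneg y
  have h2 : star y ⬝ᵥ M.mulVec y = y ⬝ᵥ A.mulVec y - s * (y ⬝ᵥ y) := by
    rw [star_trivial, hMv y, dotProduct_sub, dotProduct_smul]
    simp [smul_eq_mul]
  rw [h2] at hq
  
  linarith


lemma exists_maximal_clique {V : Type*} [Fintype V] [DecidableEq V] (G : SimpleGraph V)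
    (K : Finset V) (hK : G.IsClique (K : Set V)) :
    ∃ M : Finset V, (G.IsClique (M : Set V) ∧
      ∀ d : Finset V, G.IsClique (d : Set V) → M ⊆ d → M = d) ∧ K ⊆ M := by
  classical
  have hne : (Finset.univ.powerset.filter
      (fun M : Finset V => G.IsClique (M : Set V) ∧ K ⊆ M)).Nonempty :=
    ⟨K, by simp [hK]⟩
  obtain ⟨M, hM, hmax⟩ := Finset.exists_max_image _ Finset.card hne
  simp only [Finset.mem_filter, Finset.mem_powerset] at hM
  refine ⟨M, ⟨hM.2.1, ?_⟩, hM.2.2⟩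
  intro d hd hMd
  refine Finset.eq_of_subset_of_card_le hMd (hmax d ?_)
  simp only [Finset.mem_filter, Finset.mem_powerset]
  exact ⟨Finset.subset_univ d, hd, hM.2.2.trans hMd⟩


variable {V : Type*} [Fintype V] [DecidableEq V] (G : SimpleGraph V) [DecidableRel G.Adj]


lemma dist_two {u v w : V} (h1 : G.Adj u w) (h2 : G.Adj w v) (h3 : u ≠ v) (h4 : ¬G.Adj u v) :
    G.dist u v = 2 := by
  have hp : G.dist u v ≤ 2 := by
    have := SimpleGraph.dist_le (SimpleGraph.Walk.cons h1 (SimpleGraph.Walk.cons h2 SimpleGraph.Walk.nil))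
    simpa using this
  have hr : G.Reachable u v := ⟨SimpleGraph.Walk.cons h1 (SimpleGraph.Walk.cons h2 SimpleGraph.Walk.nil)⟩
  have h0 : G.dist u v ≠ 0 := fun h => h3 ((hr.dist_eq_zero_iff).mp h)
  have h1' : G.dist u v ≠ 1 := fun h => h4 (SimpleGraph.dist_eq_one_iff_adj.mp h)
  omega

lemma quad_expand (y : V → ℝ) :
    y ⬝ᵥ (G.adjMatrix ℝ).mulVec y = ∑ a, y a * ∑ b ∈ G.neighborFinset a, y b := by
  unfold dotProduct
  congr 1
  ext a
  rw [SimpleGraph.adjMatrix_mulVec_apply]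

lemma s_le_neg_one {s : ℝ} (hR : ∀ y : V → ℝ, s * (y ⬝ᵥ y) ≤ y ⬝ᵥ (G.adjMatrix ℝ).mulVec y)
    {u0 v0 : V} (hadj : G.Adj u0 v0) : s ≤ -1 := by
  classical
  set y : V → ℝ := fun z => (if z = u0 then (1:ℝ) else 0) - (if z = v0 then 1 else 0) with hy
  have hne : u0 ≠ v0 := hadj.ne
  have hyy : y ⬝ᵥ y = 2 := by
    unfold dotProduct
    have hpt : ∀ z, y z * y z = (if z = u0 then (1:ℝ) else 0) + (if z = v0 then 1 else 0) := by
      intro z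
      by_cases h1 : z = u0 <;> by_cases h2 : z = v0
      · exact absurd (h1 ▸ h2) hne
      all_goals simp [hy, h1, h2, hne, hne.symm]
    rw [Finset.sum_congr rfl (fun z _ => hpt z), Finset.sum_add_distrib,
      Finset.sum_ite_eq' univ u0 (fun _ => (1:ℝ)), Finset.sum_ite_eq' univ v0 (fun _ => (1:ℝ))]
    norm_num
  have hS : ∀ a, ∑ b ∈ G.neighborFinset a, y b
      = (if u0 ∈ G.neighborFinset a then (1:ℝ) else 0)
        - (if v0 ∈ G.neighborFinset a then 1 else 0) := by
    intro a
    rw [hy]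
    rw [Finset.sum_sub_distrib, Finset.sum_ite_eq' _ u0 (fun _ => (1:ℝ)),
      Finset.sum_ite_eq' _ v0 (fun _ => (1:ℝ))]
  have hAy : y ⬝ᵥ (G.adjMatrix ℝ).mulVec y = -2 := by
    rw [quad_expand]
    have hpt : ∀ a, y a * ∑ b ∈ G.neighborFinset a, y b
        = (if a = u0 then (∑ b ∈ G.neighborFinset a, y b) else 0)
          - (if a = v0 then (∑ b ∈ G.neighborFinset a, y b) else 0) := by
      intro a
      rw [hy]
      by_cases h1 : a = u0 <;> by_cases h2 : a = v0 <;> simp [h1, h2, hne, hne.symm] <;> split_ifs <;> ring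
    rw [Finset.sum_congr rfl (fun a _ => hpt a), Finset.sum_sub_distrib,
      Finset.sum_ite_eq' univ u0, Finset.sum_ite_eq' univ v0]
    simp only [Finset.mem_univ, if_true]
    rw [hS u0, hS v0]
    have m1 : v0 ∈ G.neighborFinset u0 := by
      rw [SimpleGraph.mem_neighborFinset]; exact hadj
    have m2 : u0 ∈ G.neighborFinset v0 := by
      rw [SimpleGraph.mem_neighborFinset]; exact hadj.symm
    have m3 : u0 ∉ G.neighborFinset u0 := by
      rw [SimpleGraph.mem_neighborFinset]; exact G.irrefl
    have m4 : v0 ∉ G.neighborFinset v0 := by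
      rw [SimpleGraph.mem_neighborFinset]; exact G.irrefl
    simp [m1, m2, m3, m4]
    norm_num
  have := hR y
  rw [hyy, hAy] at this
  linarith


lemma k_le_bound {s : ℝ} {k lam : ℕ}
    (hR : ∀ y : V → ℝ, s * (y ⬝ᵥ y) ≤ y ⬝ᵥ (G.adjMatrix ℝ).mulVec y)
    (hreg : ∀ a : V, (G.neighborFinset a).card = k)
    (hlam : ∀ u v : V, G.Adj u v → (G.neighborFinset u ∩ G.neighborFinset v).card = lam)
    (hs : s ≤ -1) (hk : 1 ≤ k) (u0 : V) :
    (k : ℝ) ≤ s^2 - s * lam := by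
  classical
  set N := G.neighborFinset u0 with hN
  set y : V → ℝ := fun z => (if z = u0 then (k:ℝ) else 0) + (if z ∈ N then s else 0) with hy
  have hu0N : u0 ∉ N := by rw [hN, SimpleGraph.mem_neighborFinset]; exact G.irrefl
  have hyy : y ⬝ᵥ y = (k:ℝ)^2 + k * s^2 := by
    unfold dotProduct
    have hpt : ∀ z, y z * y z = (if z = u0 then (k:ℝ)^2 else 0) + (if z ∈ N then s^2 else 0) := by
      intro z
      by_cases h1 : z = u0
      · subst h1
        simp [hy, hu0N]; ring
      · by_cases h2 : z ∈ N <;> simp [hy, h1, h2] <;> ring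
    rw [Finset.sum_congr rfl (fun z _ => hpt z), Finset.sum_add_distrib,
      Finset.sum_ite_eq' univ u0 (fun _ => (k:ℝ)^2)]
    have : (∑ z, if z ∈ N then s^2 else 0) = (N.card : ℝ) * s^2 := by
      rw [Finset.sum_ite_mem, Finset.univ_inter, Finset.sum_const, nsmul_eq_mul]
    rw [this, hreg u0]
    simp
  have hS : ∀ a : V, (∑ b ∈ G.neighborFinset a, y b)
      = (if u0 ∈ G.neighborFinset a then (k:ℝ) else 0)
        + s * ((G.neighborFinset a ∩ N).card : ℝ) := by
    intro a
    rw [hy]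
    rw [Finset.sum_add_distrib, Finset.sum_ite_eq' _ u0 (fun _ => (k:ℝ))]
    congr 1
    rw [Finset.sum_ite_mem, Finset.sum_const, nsmul_eq_mul]
    ring
  have hAy : y ⬝ᵥ (G.adjMatrix ℝ).mulVec y = 2*s*(k:ℝ)^2 + s^2*(k:ℝ)*(lam:ℝ) := by
    rw [quad_expand]
    have hsplit : ∀ a, y a * (∑ b ∈ G.neighborFinset a, y b)
        = (if a = u0 then (k:ℝ) * (∑ b ∈ G.neighborFinset a, y b) else 0)
          + (if a ∈ N then s * (∑ b ∈ G.neighborFinset a, y b) else 0) := by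
      intro a
      by_cases h1 : a = u0
      · subst h1; simp [hy, hu0N]
      · by_cases h2 : a ∈ N <;> simp [hy, h1, h2]
    rw [Finset.sum_congr rfl (fun a _ => hsplit a), Finset.sum_add_distrib,
      Finset.sum_ite_eq' univ u0]
    have hterm1 : (if u0 ∈ univ then (k:ℝ) * (∑ b ∈ G.neighborFinset u0, y b) else 0)
        = s * (k:ℝ)^2 := by
      simp only [Finset.mem_univ, if_true]
      rw [hS u0, if_neg (by rw [SimpleGraph.mem_neighborFinset]; exact G.irrefl), ← hN,
        Finset.inter_self, hreg u0]
      ring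
    have hterm2 : (∑ a, if a ∈ N then s * (∑ b ∈ G.neighborFinset a, y b) else 0)
        = (k:ℝ) * (s * ((k:ℝ) + s * lam)) := by
      rw [Finset.sum_ite_mem, Finset.univ_inter]
      have hval : ∀ a ∈ N, s * (∑ b ∈ G.neighborFinset a, y b) = s * ((k:ℝ) + s * lam) := by
        intro a ha
        have hadj : G.Adj u0 a := by rwa [← SimpleGraph.mem_neighborFinset, ← hN]
        rw [hS a]
        rw [if_pos (by rw [SimpleGraph.mem_neighborFinset]; exact hadj.symm)]
        rw [hlam a u0 hadj.symm]
      rw [Finset.sum_congr rfl hval, Finset.sum_const, nsmul_eq_mul, hreg u0]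
    rw [hterm1, hterm2]
    ring
  have hineq := hR y
  rw [hyy, hAy] at hineq
  have hkpos : (0:ℝ) < k := by exact_mod_cast hk
  have hsneg : s < 0 := by linarith
  by_contra hcon
  push_neg at hcon
  nlinarith [mul_pos hkpos hkpos, sq_nonneg s, mul_pos (mul_pos hkpos hkpos) (neg_pos.mpr hsneg)]


lemma geom_eig_bound (CF : Finset (Finset V))
    (hclique : ∀ M ∈ CF, G.IsClique (M : Set V))
    (huniq : ∀ u v : V, G.Adj u v → (CF.filter (fun M => u ∈ M ∧ v ∈ M)).card = 1)
    {s : ℝ} {x : V → ℝ} (hx0 : x ≠ 0) (hxe : (G.adjMatrix ℝ).mulVec x = s • x) :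
    ∃ a : V, (-s) ≤ ((CF.filter (fun M => a ∈ M)).card : ℝ) := by
  classical
  set r : V → ℕ := fun a => (CF.filter (fun M => a ∈ M)).card with hr
  set c : V → V → ℕ := fun i j => (CF.filter (fun M => i ∈ M ∧ j ∈ M)).card with hc
  -- step 1 : expansion
  have hexp : ∑ M ∈ CF, (∑ v ∈ M, x v)^2 = ∑ i, ∑ j, x i * x j * (c i j : ℝ) := by
    have h1 : ∀ M ∈ CF, (∑ v ∈ M, x v)^2
        = ∑ i, ∑ j, (if i ∈ M ∧ j ∈ M then x i * x j else 0) := by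
      intro M _
      rw [sq, Finset.sum_mul_sum]
      have hin : ∀ i, (∑ j ∈ M, x i * x j)
          = ∑ j, (if j ∈ M then x i * x j else 0) := by
        intro i
        rw [Finset.sum_ite_mem, Finset.univ_inter]
      rw [Finset.sum_congr rfl (fun i _ => hin i)]
      have houter : (∑ i ∈ M, ∑ j, if j ∈ M then x i * x j else 0)
          = ∑ i, (if i ∈ M then ∑ j, (if j ∈ M then x i * x j else 0) else 0) := by
        rw [Finset.sum_ite_mem, Finset.univ_inter]
      rw [houter]
      apply Finset.sum_congr rfl
      intro i _
      by_cases hiM : i ∈ M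
      · simp only [hiM, if_true, true_and]
      · simp only [hiM, if_false, false_and]
        exact (Finset.sum_const_zero).symm
    rw [Finset.sum_congr rfl h1, Finset.sum_comm]
    apply Finset.sum_congr rfl
    intro i _
    rw [Finset.sum_comm]
    apply Finset.sum_congr rfl
    intro j _
    rw [Finset.sum_ite, Finset.sum_const_zero, add_zero, Finset.sum_const, nsmul_eq_mul, hc]
    ring
  -- step 2 : identify the double sum
  have hdiag : ∀ i, c i i = r i := by
    intro i
    simp [hc, hr]
  have hoff : ∀ i j, i ≠ j → (c i j : ℝ) = if G.Adj i j then 1 else 0 := by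
    intro i j hij
    by_cases hadj : G.Adj i j
    · rw [if_pos hadj]
      simp only [hc]
      rw [huniq i j hadj]
      norm_num
    · rw [if_neg hadj, hc]
      norm_cast
      rw [Finset.card_eq_zero, Finset.filter_eq_empty_iff]
      rintro M hM ⟨hiM, hjM⟩
      exact hadj (hclique M hM hiM hjM hij)
  have hsplit : ∑ i, ∑ j, x i * x j * (c i j : ℝ)
      = ∑ i, (x i)^2 * (r i : ℝ) + ∑ i, x i * ∑ j ∈ G.neighborFinset i, x j := by
    rw [← Finset.sum_add_distrib]
    apply Finset.sum_congr rfl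
    intro i _
    have h2 : x i * x i * (c i i : ℝ) + ∑ j ∈ univ.erase i, x i * x j * (c i j : ℝ)
        = ∑ j, x i * x j * (c i j : ℝ) :=
      Finset.add_sum_erase univ (fun j => x i * x j * (c i j : ℝ)) (Finset.mem_univ i)
    rw [← h2, hdiag]
    congr 1
    · ring
    have h3 : ∑ j ∈ univ.erase i, x i * x j * (c i j : ℝ)
        = ∑ j ∈ univ.erase i, (if G.Adj i j then x i * x j else 0) := by
      apply Finset.sum_congr rfl
      intro j hj
      rw [hoff i j (fun h => (Finset.mem_erase.mp hj).1 h.symm)]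
      split_ifs <;> ring
    rw [h3]
    have h4 : ∑ j ∈ univ.erase i, (if G.Adj i j then x i * x j else 0)
        = ∑ j, (if G.Adj i j then x i * x j else 0) := by
      apply Finset.sum_subset (Finset.subset_univ _)
      intro j _ hj
      have : j = i := by
        by_contra hne
        exact hj (Finset.mem_erase.mpr ⟨hne, Finset.mem_univ j⟩)
      subst this
      simp
    rw [h4, SimpleGraph.neighborFinset_eq_filter, Finset.sum_filter, Finset.mul_sum]
    apply Finset.sum_congr rfl
    intro j _
    split_ifs <;> ring
  -- step 3: the eigen identity
  have heig : ∑ i, x i * ∑ j ∈ G.neighborFinset i, x j = s * ∑ i, (x i)^2 := by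
    have h5 : ∀ i, ∑ j ∈ G.neighborFinset i, x j = s * x i := by
      intro i
      have := congrFun hxe i
      rw [SimpleGraph.adjMatrix_mulVec_apply] at this
      simpa using this
    rw [Finset.sum_congr rfl (fun i _ => by rw [h5 i])]
    rw [Finset.mul_sum]
    apply Finset.sum_congr rfl
    intro i _
    ring
  -- step 4: conclude
  have hpos : (0:ℝ) < ∑ i, (x i)^2 := by
    have hex : ∃ i, x i ≠ 0 := by
      by_contra hcon
      push_neg at hcon
      exact hx0 (funext hcon)
    obtain ⟨i0, hi0⟩ := hex
    apply Finset.sum_pos' (fun i _ => sq_nonneg _)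
    exact ⟨i0, Finset.mem_univ i0, by positivity⟩
  have hVne : Nonempty V := by
    rcases isEmpty_or_nonempty V with h | h
    · exact absurd (funext (fun i => (IsEmpty.false i).elim)) hx0
    · exact h
  haveI := hVne
  obtain ⟨a, _, hamax⟩ := Finset.exists_max_image univ r Finset.univ_nonempty
  refine ⟨a, ?_⟩
  have hSS : (0:ℝ) ≤ ∑ M ∈ CF, (∑ v ∈ M, x v)^2 :=
    Finset.sum_nonneg (fun M _ => sq_nonneg _)
  rw [hexp, hsplit, heig] at hSS
  have hbound : ∑ i, (x i)^2 * (r i : ℝ) ≤ (r a : ℝ) * ∑ i, (x i)^2 := by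
    rw [Finset.mul_sum]
    apply Finset.sum_le_sum
    intro i _
    have : (r i : ℝ) ≤ (r a : ℝ) := by exact_mod_cast hamax i (Finset.mem_univ i)
    nlinarith [sq_nonneg (x i)]
  have : 0 ≤ (r a : ℝ) * ∑ i, (x i)^2 + s * ∑ i, (x i)^2 := by linarith
  nlinarith

end gluedaux

section gluedaux2
open Matrix
set_option linter.unusedSectionVars false
set_option maxHeartbeats 1000000
set_option linter.unnecessarySeqFocus false
set_option linter.deprecated false


lemma offDiag_insert_card {α : Type*} [DecidableEq α] (Y : Finset α) (a : α) (ha : a ∉ Y)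
    {M : Type*} [AddCommMonoid M] [PartialOrder M] [IsOrderedAddMonoid M] (g : α × α → M) (hg : ∀ p, 0 ≤ g p) :
    ∑ p ∈ Y.offDiag, g p + ∑ y ∈ Y, g (a, y) ≤ ∑ p ∈ (insert a Y).offDiag, g p := by
  have hsub : Y.offDiag ∪ Y.image (fun y => (a, y)) ⊆ (insert a Y).offDiag := by
    intro p hp
    simp only [mem_union, mem_offDiag, mem_image] at hp ⊢
    rcases hp with ⟨h1, h2, h3⟩ | ⟨y, hy, heq⟩
    · exact ⟨by simp [h1], by simp [h2], h3⟩
    · subst heq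
      refine ⟨by simp, by simp [hy], ?_⟩
      intro h; simp only [] at h; rw [← h] at hy; exact ha hy
  have hdisj : Disjoint Y.offDiag (Y.image (fun y => (a, y))) := by
    rw [Finset.disjoint_left]
    rintro ⟨p1, p2⟩ hp hq
    simp only [mem_offDiag] at hp
    simp only [mem_image] at hq
    obtain ⟨y, hy, heq⟩ := hq
    have : p1 = a := by cases heq; rfl
    exact ha (this ▸ hp.1)
  calc ∑ p ∈ Y.offDiag, g p + ∑ y ∈ Y, g (a, y)
      = ∑ p ∈ Y.offDiag ∪ Y.image (fun y => (a, y)), g p := by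
        rw [Finset.sum_union hdisj, Finset.sum_image]
        intro x hx y hy h; cases h; rfl
    _ ≤ ∑ p ∈ (insert a Y).offDiag, g p :=
        Finset.sum_le_sum_of_subset_of_nonneg hsub (fun p _ _ => hg p)

lemma bonferroni {α β : Type*} [DecidableEq α] [DecidableEq β] (Y : Finset α) (f : α → Finset β) :
    ∑ y ∈ Y, (f y).card ≤ (Y.biUnion f).card + ∑ p ∈ Y.offDiag, (f p.1 ∩ f p.2).card := by
  induction Y using Finset.induction_on with
  | empty => simp
  | @insert a Y ha ih =>
    rw [Finset.sum_insert ha, Finset.biUnion_insert]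
    have h1 : (f a).card + (Y.biUnion f).card
        ≤ (f a ∪ Y.biUnion f).card + ∑ y ∈ Y, (f a ∩ f y).card := by
      have := Finset.card_union_add_card_inter (f a) (Y.biUnion f)
      have h2 : (f a ∩ Y.biUnion f).card ≤ ∑ y ∈ Y, (f a ∩ f y).card := by
        have h4 : f a ∩ Y.biUnion f = Y.biUnion (fun y => f a ∩ f y) := by
          ext x; simp [Finset.mem_biUnion, Finset.mem_inter]; tauto
        rw [h4]; exact Finset.card_biUnion_le
      omega
    have h3 : ∑ p ∈ Y.offDiag, (f p.1 ∩ f p.2).card + ∑ y ∈ Y, (f a ∩ f y).card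
        ≤ ∑ p ∈ (insert a Y).offDiag, (f p.1 ∩ f p.2).card := by
      exact offDiag_insert_card Y a ha (fun p => (f p.1 ∩ f p.2).card) (fun p => Nat.zero_le _)
    omega

section core
variable {V : Type*} [Fintype V] [DecidableEq V] {G : SimpleGraph V} [DecidableRel G.Adj]
  {k lam mu : ℕ} {Q : ℝ}

-- the greedy covering lemma
lemma cover_lemma
    (hreg : ∀ a : V, (G.neighborFinset a).card = k)
    (hlam : ∀ u v : V, G.Adj u v → (G.neighborFinset u ∩ G.neighborFinset v).card = lam)
    (hmu2 : ∀ y z : V, y ≠ z → ¬G.Adj y z → (∃ w, G.Adj y w ∧ G.Adj w z) →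
      (G.neighborFinset y ∩ G.neighborFinset z).card ≤ mu)
    (hQ1 : 1 ≤ Q) (hmu1 : 1 ≤ mu) (hlam1 : 1 ≤ lam)
    (hkQ : (k:ℝ) ≤ Q*Q + Q*lam) (hQmu : Q * mu ≤ lam/100)
    {u v : V} (hadj : G.Adj u v) :
    ∃ Y : Finset V, v ∈ Y ∧ Y ⊆ G.neighborFinset u ∧
      (∀ y ∈ Y, ∀ z ∈ Y, y ≠ z → ¬G.Adj y z) ∧
      (∀ w ∈ G.neighborFinset u, ∃ y ∈ Y, w = y ∨ G.Adj y w) ∧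
      ((Y.card : ℝ) ≤ 2*Q) := by
  classical
  set N : V → Finset V := fun a => G.neighborFinset a with hNdef
  set S := (N u).powerset.filter
    (fun Y : Finset V => v ∈ Y ∧ ∀ y ∈ Y, ∀ z ∈ Y, y ≠ z → ¬G.Adj y z) with hS
  have hvS : {v} ∈ S := by
    simp only [hS, Finset.mem_filter, Finset.mem_powerset]
    refine ⟨Finset.singleton_subset_iff.mpr ?_, Finset.mem_singleton_self v, ?_⟩
    · rw [SimpleGraph.mem_neighborFinset]; exact hadj
    · intro y hy z hz hne
      rw [Finset.mem_singleton] at hy hz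
      exact absurd (hy.trans hz.symm) hne
  obtain ⟨Y, hYS, hYmax⟩ := Finset.exists_max_image S Finset.card ⟨{v}, hvS⟩
  simp only [hS, Finset.mem_filter, Finset.mem_powerset] at hYS
  obtain ⟨hYsub, hvY, hYpair⟩ := hYS
  have hcover : ∀ w ∈ N u, ∃ y ∈ Y, w = y ∨ G.Adj y w := by
    intro w hw
    by_contra hcon
    push_neg at hcon
    have hwY : w ∉ Y := fun hwY => (hcon w hwY).1 rfl
    have hY' : insert w Y ∈ S := by
      simp only [hS, Finset.mem_filter, Finset.mem_powerset]
      refine ⟨Finset.insert_subset hw hYsub, Finset.mem_insert_of_mem hvY, ?_⟩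
      intro y hy z hz hne
      rcases Finset.mem_insert.mp hy with rfl | hy' <;>
        rcases Finset.mem_insert.mp hz with rfl | hz'
      · exact absurd rfl hne
      · exact fun h => (hcon z hz').2 h.symm
      · exact fun h => (hcon y hy').2 h
      · exact hYpair y hy' z hz' hne
    have := hYmax _ hY'
    rw [Finset.card_insert_of_notMem hwY] at this
    omega
  refine ⟨Y, hvY, hYsub, hYpair, hcover, ?_⟩
  by_contra hbig
  push_neg at hbig
  set n0 := Nat.floor (2*Q) + 1 with hn0
  have h2Qpos : (0:ℝ) ≤ 2*Q := by linarith
  have hfl : (Nat.floor (2*Q) : ℝ) ≤ 2*Q := Nat.floor_le h2Qpos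
  have hn0le : n0 ≤ Y.card := by
    have : (Nat.floor (2*Q) : ℝ) < (Y.card : ℝ) := lt_of_le_of_lt hfl hbig
    have := Nat.cast_lt.mp this
    omega
  obtain ⟨Y0, hY0sub, hY0card⟩ := Finset.exists_subset_card_eq hn0le
  -- apply bonferroni to the family y ↦ insert y (N u ∩ N y)
  set f : V → Finset V := fun y => insert y (N u ∩ N y) with hf
  have hcards : ∀ y ∈ Y0, (f y).card = lam + 1 := by
    intro y hy
    have hyNu : y ∈ N u := hYsub (hY0sub hy)
    have hadjuy : G.Adj u y := by rwa [SimpleGraph.mem_neighborFinset] at hyNu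
    rw [hf]
    rw [Finset.card_insert_of_notMem (by
      rw [Finset.mem_inter]
      exact fun h => G.irrefl ((SimpleGraph.mem_neighborFinset _ _ _).mp h.2))]
    rw [hlam u y hadjuy]
  have hbiU : Y0.biUnion f ⊆ N u := by
    intro a ha
    obtain ⟨y, hy, hay⟩ := Finset.mem_biUnion.mp ha
    rcases Finset.mem_insert.mp hay with rfl | h
    · exact hYsub (hY0sub hy)
    · exact (Finset.mem_inter.mp h).1
  have hpairsmall : ∀ p ∈ Y0.offDiag, (f p.1 ∩ f p.2).card ≤ mu := by
    rintro ⟨y, z⟩ hp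
    rw [Finset.mem_offDiag] at hp
    obtain ⟨hy, hz, hyz⟩ := hp
    have hynadj : ¬G.Adj y z := hYpair y (hY0sub hy) z (hY0sub hz) hyz
    have hyNu : G.Adj u y := by
      have := hYsub (hY0sub hy); rwa [SimpleGraph.mem_neighborFinset] at this
    have hzNu : G.Adj u z := by
      have := hYsub (hY0sub hz); rwa [SimpleGraph.mem_neighborFinset] at this
    have hsub2 : f y ∩ f z ⊆ N y ∩ N z := by
      intro a ha
      rw [Finset.mem_inter] at ha
      obtain ⟨ha1, ha2⟩ := ha
      rcases Finset.mem_insert.mp ha1 with rfl | h1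
      · rcases Finset.mem_insert.mp ha2 with rfl | h2
        · exact absurd rfl hyz
        · exact absurd ((Finset.mem_inter.mp h2).2) (by
            rw [SimpleGraph.mem_neighborFinset]; exact fun h => hynadj h.symm)
      · rcases Finset.mem_insert.mp ha2 with rfl | h2
        · exact absurd ((Finset.mem_inter.mp h1).2) (by
            rw [SimpleGraph.mem_neighborFinset]; exact hynadj)
        · rw [Finset.mem_inter]
          exact ⟨(Finset.mem_inter.mp h1).2, (Finset.mem_inter.mp h2).2⟩
    calc (f y ∩ f z).card ≤ (N y ∩ N z).card := Finset.card_le_card hsub2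
      _ ≤ mu := hmu2 y z hyz hynadj ⟨u, hyNu.symm, hzNu⟩
  have hbon := bonferroni Y0 f
  have hlhs : ∑ y ∈ Y0, (f y).card = n0 * (lam + 1) := by
    rw [Finset.sum_congr rfl hcards, Finset.sum_const, hY0card, smul_eq_mul]
  have hrhs1 : (Y0.biUnion f).card ≤ k := by
    calc (Y0.biUnion f).card ≤ (N u).card := Finset.card_le_card hbiU
      _ = k := hreg u
  have hrhs2 : ∑ p ∈ Y0.offDiag, (f p.1 ∩ f p.2).card ≤ n0 * n0 * mu := by
    calc ∑ p ∈ Y0.offDiag, (f p.1 ∩ f p.2).card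
        ≤ ∑ _p ∈ Y0.offDiag, mu := Finset.sum_le_sum hpairsmall
      _ = Y0.offDiag.card * mu := by rw [Finset.sum_const, smul_eq_mul]
      _ ≤ n0 * n0 * mu := by
          apply Nat.mul_le_mul_right
          calc Y0.offDiag.card = Y0.card * Y0.card - Y0.card := Finset.offDiag_card Y0
            _ ≤ n0 * n0 := by rw [hY0card]; omega
  have hmain : n0 * (lam + 1) ≤ k + n0 * n0 * mu := by omega
  -- now the numeric contradiction
  have hn0R : (2*Q) < (n0:ℝ) := by
    rw [hn0]
    push_cast
    exact Nat.lt_floor_add_one (2*Q)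
  have hn0R2 : (n0:ℝ) ≤ 2*Q + 1 := by
    rw [hn0]; push_cast; linarith
  have hmainR : (n0:ℝ) * ((lam:ℝ) + 1) ≤ (k:ℝ) + (n0:ℝ) * (n0:ℝ) * (mu:ℝ) := by
    exact_mod_cast hmain
  have hlamR : (1:ℝ) ≤ (lam:ℝ) := by exact_mod_cast hlam1
  have hmuR : (1:ℝ) ≤ (mu:ℝ) := by exact_mod_cast hmu1
  -- Q ≤ lam/100 since Q ≤ Q*mu ≤ lam/100
  have hQlam : Q ≤ (lam:ℝ)/100 := by nlinarith
  have hQ0 : (0:ℝ) ≤ Q := by linarith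
  have hn0pos : (0:ℝ) < (n0:ℝ) := by linarith
  have hmupos : (0:ℝ) ≤ (mu:ℝ) := by linarith
  have hn0sq : (n0:ℝ)*(n0:ℝ) ≤ 9*Q*Q := by nlinarith
  have e1 : (n0:ℝ)*(n0:ℝ)*(mu:ℝ) ≤ 9*Q*Q*(mu:ℝ) :=
    mul_le_mul_of_nonneg_right hn0sq hmupos
  have e2 : 9*Q*(Q*(mu:ℝ)) ≤ 9*Q*((lam:ℝ)/100) :=
    mul_le_mul_of_nonneg_left hQmu (by linarith)
  have e3 : Q*Q ≤ Q*((lam:ℝ)/100) := mul_le_mul_of_nonneg_left hQlam hQ0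
  have e4 : 2*Q*((lam:ℝ)+1) ≤ (n0:ℝ)*((lam:ℝ)+1) :=
    mul_le_mul_of_nonneg_right (le_of_lt hn0R) (by linarith)
  have hQlampos : (0:ℝ) < Q*(lam:ℝ) :=
    mul_pos (lt_of_lt_of_le zero_lt_one hQ1) (lt_of_lt_of_le zero_lt_one hlamR)
  nlinarith [e1, e2, e3, e4, hQlampos, hmainR, hkQ]


-- the key lemma: for every edge, almost all common neighbours are "attached"
lemma crux_lemma
    (hreg : ∀ a : V, (G.neighborFinset a).card = k)
    (hlam : ∀ u v : V, G.Adj u v → (G.neighborFinset u ∩ G.neighborFinset v).card = lam)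
    (hmu2 : ∀ y z : V, y ≠ z → ¬G.Adj y z → (∃ w, G.Adj y w ∧ G.Adj w z) →
      (G.neighborFinset y ∩ G.neighborFinset z).card ≤ mu)
    (hQ1 : 1 ≤ Q) (hmu1 : 1 ≤ mu) (hlam1 : 1 ≤ lam)
    (hkQ : (k:ℝ) ≤ Q*Q + Q*lam) (hQmu : Q * mu ≤ lam/100)
    {u v : V} (hadj : G.Adj u v) :
    (((G.neighborFinset u ∩ G.neighborFinset v).filter
        (fun w => ¬ ((((G.neighborFinset u ∩ G.neighborFinset v) \
          (insert w (G.neighborFinset w))).card : ℝ) ≤ 2*Q*mu + 1))).card : ℝ)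
      ≤ 2*Q*(mu:ℝ) := by
  classical
  obtain ⟨Y, hvY, hYsub, hYpair, hcover, hYcard⟩ :=
    cover_lemma hreg hlam hmu2 hQ1 hmu1 hlam1 hkQ hQmu hadj
  set N : V → Finset V := fun a => G.neighborFinset a with hNdef
  set lhs := (N u ∩ N v).filter
    (fun w => ¬ ((((N u ∩ N v) \ (insert w (N w))).card : ℝ) ≤ 2*Q*mu + 1)) with hlhs
  have hmuR : (1:ℝ) ≤ (mu:ℝ) := by exact_mod_cast hmu1
  have hYc1 : 1 ≤ Y.card := Finset.card_pos.mpr ⟨v, hvY⟩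
  have hYecard : ((Y.erase v).card : ℝ) ≤ 2*Q - 1 := by
    rw [Finset.card_erase_of_mem hvY]
    have : ((Y.card - 1 : ℕ) : ℝ) = (Y.card : ℝ) - 1 := by
      rw [Nat.cast_sub hYc1]; norm_num
    rw [this]; linarith
  -- key claim
  have hkey : ∀ w ∈ lhs, ∃ y ∈ Y.erase v, G.Adj y w := by
    intro w hw
    rw [hlhs, Finset.mem_filter] at hw
    obtain ⟨hwL, hwbad⟩ := hw
    push_neg at hwbad
    have hadjuw : G.Adj u w := by
      have := (Finset.mem_inter.mp hwL).1
      rwa [SimpleGraph.mem_neighborFinset] at this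
    have hadjvw : G.Adj v w := by
      have := (Finset.mem_inter.mp hwL).2
      rwa [SimpleGraph.mem_neighborFinset] at this
    have hcarduw : (N u ∩ N w).card = lam := hlam u w hadjuw
    -- covering bound
    have hsub : N u ∩ N w ⊆ Y.biUnion (fun y => (N u ∩ N w) ∩ insert y (N y)) := by
      intro a ha
      obtain ⟨y, hy, hya⟩ := hcover a (Finset.mem_inter.mp ha).1
      refine Finset.mem_biUnion.mpr ⟨y, hy, Finset.mem_inter.mpr ⟨ha, ?_⟩⟩
      rcases hya with rfl | hya
      · exact Finset.mem_insert_self a _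
      · exact Finset.mem_insert_of_mem (by rwa [SimpleGraph.mem_neighborFinset])
    have hsum : lam ≤ ∑ y ∈ Y, ((N u ∩ N w) ∩ insert y (N y)).card := by
      calc lam = (N u ∩ N w).card := hcarduw.symm
        _ ≤ (Y.biUnion (fun y => (N u ∩ N w) ∩ insert y (N y))).card :=
            Finset.card_le_card hsub
        _ ≤ ∑ y ∈ Y, ((N u ∩ N w) ∩ insert y (N y)).card := Finset.card_biUnion_le
    -- the v-term is small
    have htermv : ((N u ∩ N w) ∩ insert v (N v)).card
        + ((N u ∩ N v) \ insert w (N w)).card ≤ lam := by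
      set A := (N u ∩ N v) ∩ N w with hA
      set B := (N u ∩ N v) \ insert w (N w) with hB
      have h1 : (N u ∩ N w) ∩ insert v (N v) ⊆ insert v A := by
        intro a ha
        rw [Finset.mem_inter] at ha
        obtain ⟨ha1, ha2⟩ := ha
        rcases Finset.mem_insert.mp ha2 with rfl | ha2'
        · exact Finset.mem_insert_self _ _
        · refine Finset.mem_insert_of_mem ?_
          rw [hA, Finset.mem_inter, Finset.mem_inter]
          exact ⟨⟨(Finset.mem_inter.mp ha1).1, ha2'⟩, (Finset.mem_inter.mp ha1).2⟩
      have h2 : insert w A ⊆ N u ∩ N v := by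
        refine Finset.insert_subset hwL ?_
        rw [hA]; exact Finset.inter_subset_left
      have h3 : Disjoint (insert w A) B := by
        rw [Finset.disjoint_left]
        intro a ha hab
        rw [hB, Finset.mem_sdiff] at hab
        rcases Finset.mem_insert.mp ha with rfl | haA
        · exact hab.2 (Finset.mem_insert_self _ _)
        · refine hab.2 (Finset.mem_insert_of_mem ?_)
          rw [hA, Finset.mem_inter] at haA
          exact haA.2
      have hwA : w ∉ A := by
        rw [hA, Finset.mem_inter]
        exact fun h => G.irrefl ((SimpleGraph.mem_neighborFinset _ _ _).mp h.2)
      have h4 : (insert w A).card + B.card ≤ lam := by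
        rw [← Finset.card_union_of_disjoint h3, ← hlam u v hadj]
        apply Finset.card_le_card
        rw [Finset.union_subset_iff]
        refine ⟨h2, ?_⟩
        rw [hB]; exact Finset.sdiff_subset
      have h5 : (insert w A).card = A.card + 1 := Finset.card_insert_of_notMem hwA
      have h6 : ((N u ∩ N w) ∩ insert v (N v)).card ≤ A.card + 1 :=
        le_trans (Finset.card_le_card h1) (Finset.card_insert_le _ _)
      omega
    -- split the sum at v
    have hsplit : ((N u ∩ N w) ∩ insert v (N v)).card
        + ∑ y ∈ Y.erase v, ((N u ∩ N w) ∩ insert y (N y)).card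
        = ∑ y ∈ Y, ((N u ∩ N w) ∩ insert y (N y)).card :=
      Finset.add_sum_erase Y (fun y => ((N u ∩ N w) ∩ insert y (N y)).card) hvY
    by_contra hnone
    push_neg at hnone
    have hsmall : ∀ y ∈ Y.erase v, ((N u ∩ N w) ∩ insert y (N y)).card ≤ mu := by
      intro y hy
      have hyne : y ≠ v := (Finset.mem_erase.mp hy).1
      have hyY : y ∈ Y := (Finset.mem_erase.mp hy).2
      have hnadj : ¬G.Adj y w := hnone y hy
      have hsub2 : (N u ∩ N w) ∩ insert y (N y) ⊆ N w ∩ N y := by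
        intro a ha
        rw [Finset.mem_inter] at ha
        obtain ⟨ha1, ha2⟩ := ha
        rcases Finset.mem_insert.mp ha2 with rfl | ha2'
        · exact absurd ((SimpleGraph.mem_neighborFinset _ _ _).mp
            (Finset.mem_inter.mp ha1).2).symm hnadj
        · exact Finset.mem_inter.mpr ⟨(Finset.mem_inter.mp ha1).2, ha2'⟩
      have hwy : w ≠ y := by
        rintro rfl
        exact hYpair w hyY v hvY hyne (hadjvw.symm)
      have hadjuy : G.Adj u y := by
        have := hYsub hyY
        rwa [SimpleGraph.mem_neighborFinset] at this
      calc ((N u ∩ N w) ∩ insert y (N y)).card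
          ≤ (N w ∩ N y).card := Finset.card_le_card hsub2
        _ ≤ mu := hmu2 w y hwy (fun h => hnadj h.symm) ⟨u, hadjuw.symm, hadjuy⟩
    have hsumsmall : ∑ y ∈ Y.erase v, ((N u ∩ N w) ∩ insert y (N y)).card
        ≤ (Y.erase v).card * mu := by
      calc ∑ y ∈ Y.erase v, ((N u ∩ N w) ∩ insert y (N y)).card
          ≤ ∑ _y ∈ Y.erase v, mu := Finset.sum_le_sum hsmall
        _ = (Y.erase v).card * mu := by rw [Finset.sum_const, smul_eq_mul]
    -- now: e_w ≤ (|Y|-1)·mu  but e_w > 2Qmu+1 : contradiction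
    have hew : ((N u ∩ N v) \ insert w (N w)).card ≤ (Y.erase v).card * mu := by omega
    have hewR : (((N u ∩ N v) \ insert w (N w)).card : ℝ) ≤ (2*Q - 1) * mu := by
      calc (((N u ∩ N v) \ insert w (N w)).card : ℝ)
          ≤ ((Y.erase v).card : ℝ) * (mu:ℝ) := by exact_mod_cast hew
        _ ≤ (2*Q - 1) * mu := by
            apply mul_le_mul_of_nonneg_right hYecard (by linarith)
    nlinarith [hwbad]
  -- conclude : lhs is covered by at most 2Q-1 many mu-sets
  have hNAsub : lhs ⊆ (Y.erase v).biUnion (fun y => N y ∩ N v) := by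
    intro w hw
    obtain ⟨y, hy, hadjyw⟩ := hkey w hw
    refine Finset.mem_biUnion.mpr ⟨y, hy, Finset.mem_inter.mpr ⟨?_, ?_⟩⟩
    · rwa [SimpleGraph.mem_neighborFinset]
    · rw [SimpleGraph.mem_neighborFinset]
      rw [hlhs, Finset.mem_filter] at hw
      have := (Finset.mem_inter.mp hw.1).2
      rwa [SimpleGraph.mem_neighborFinset] at this
  have hbound : lhs.card ≤ (Y.erase v).card * mu := by
    calc lhs.card ≤ ((Y.erase v).biUnion (fun y => N y ∩ N v)).card :=
          Finset.card_le_card hNAsub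
      _ ≤ ∑ y ∈ Y.erase v, (N y ∩ N v).card := Finset.card_biUnion_le
      _ ≤ ∑ _y ∈ Y.erase v, mu := by
          apply Finset.sum_le_sum
          intro y hy
          have hyne : y ≠ v := (Finset.mem_erase.mp hy).1
          have hyY : y ∈ Y := (Finset.mem_erase.mp hy).2
          have hadjuy : G.Adj u y := by
            have := hYsub hyY
            rwa [SimpleGraph.mem_neighborFinset] at this
          exact hmu2 y v hyne (hYpair y hyY v hvY hyne) ⟨u, hadjuy.symm, hadj⟩
      _ = (Y.erase v).card * mu := by rw [Finset.sum_const, smul_eq_mul]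
  calc (lhs.card : ℝ) ≤ ((Y.erase v).card : ℝ) * mu := by exact_mod_cast hbound
    _ ≤ (2*Q - 1) * mu := mul_le_mul_of_nonneg_right hYecard (by linarith)
    _ ≤ 2*Q*mu := by nlinarith


-- building the clique attached to an edge
lemma attached_clique
    (hreg : ∀ a : V, (G.neighborFinset a).card = k)
    (hlam : ∀ u v : V, G.Adj u v → (G.neighborFinset u ∩ G.neighborFinset v).card = lam)
    (hmu2 : ∀ y z : V, y ≠ z → ¬G.Adj y z → (∃ w, G.Adj y w ∧ G.Adj w z) →
      (G.neighborFinset y ∩ G.neighborFinset z).card ≤ mu)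
    (hQ1 : 1 ≤ Q) (hmu1 : 1 ≤ mu) (hlam1 : 1 ≤ lam)
    (hkQ : (k:ℝ) ≤ Q*Q + Q*lam) (hQmu : Q * mu ≤ lam/100)
    {u v : V} (hadj : G.Adj u v) :
    ∃ K : Finset V, G.IsClique (K : Set V) ∧ u ∈ K ∧ v ∈ K ∧
      ((lam:ℝ) + 2 - 2*Q*mu ≤ K.card) := by
  classical
  have hmuR : (1:ℝ) ≤ (mu:ℝ) := by exact_mod_cast hmu1
  have hlamR : (1:ℝ) ≤ (lam:ℝ) := by exact_mod_cast hlam1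
  have hQmu1 : (1:ℝ) ≤ Q * mu := by nlinarith
  have hbig : (mu:ℝ) + 4*Q*mu + 2 < lam := by nlinarith
  set N : V → Finset V := fun a => G.neighborFinset a with hNdef
  set P : V → Prop := fun w => (((N u ∩ N v) \ (insert w (N w))).card : ℝ) ≤ 2*Q*mu + 1
    with hP
  set att := (N u ∩ N v).filter P with hatt
  set bad := (N u ∩ N v).filter (fun w => ¬ P w) with hbad
  have hcrux : (bad.card : ℝ) ≤ 2*Q*mu :=
    crux_lemma hreg hlam hmu2 hQ1 hmu1 hlam1 hkQ hQmu hadj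
  have hattcard : att.card + bad.card = lam := by
    rw [hatt, hbad, Finset.card_filter_add_card_filter_not, hlam u v hadj]
  have hattΛ : att ⊆ N u ∩ N v := Finset.filter_subset _ _
  have huv : u ≠ v := hadj.ne
  have hunotΛ : u ∉ N u ∩ N v := by
    rw [Finset.mem_inter]
    exact fun h => G.irrefl ((SimpleGraph.mem_neighborFinset _ _ _).mp h.1)
  have hvnotΛ : v ∉ N u ∩ N v := by
    rw [Finset.mem_inter]
    exact fun h => G.irrefl ((SimpleGraph.mem_neighborFinset _ _ _).mp h.2)
  have hattadj : ∀ w ∈ att, G.Adj u w ∧ G.Adj v w := by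
    intro w hw
    have := hattΛ hw
    rw [Finset.mem_inter] at this
    exact ⟨(SimpleGraph.mem_neighborFinset _ _ _).mp this.1,
      (SimpleGraph.mem_neighborFinset _ _ _).mp this.2⟩
  refine ⟨insert u (insert v att), ?_, Finset.mem_insert_self _ _,
    Finset.mem_insert_of_mem (Finset.mem_insert_self _ _), ?_⟩
  · -- clique
    intro a ha b hb hne
    simp only [Finset.coe_insert, Set.mem_insert_iff, Finset.mem_coe] at ha hb
    rcases ha with rfl | rfl | ha <;> rcases hb with rfl | rfl | hb
    · exact absurd rfl hne
    · exact hadj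
    · exact (hattadj b hb).1
    · exact hadj.symm
    · exact absurd rfl hne
    · exact (hattadj b hb).2
    · exact ((hattadj a ha).1).symm
    · exact ((hattadj a ha).2).symm
    · -- the main case : two attached vertices are adjacent
      by_contra hnadj
      have haa := hattadj a ha
      have hbb := hattadj b hb
      have hle : (N a ∩ N b).card ≤ mu := hmu2 a b hne hnadj ⟨u, haa.1.symm, hbb.1⟩
      set X := ((N u ∩ N v) ∩ (insert a (N a))) ∩ (insert b (N b)) with hX
      have hcover3 : (N u ∩ N v) ⊆ X ∪ ((N u ∩ N v) \ insert a (N a))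
          ∪ ((N u ∩ N v) \ insert b (N b)) := by
        intro z hz
        by_cases h1 : z ∈ insert a (N a)
        · by_cases h2 : z ∈ insert b (N b)
          · exact Finset.mem_union_left _ (Finset.mem_union_left _ (by
              rw [hX, Finset.mem_inter, Finset.mem_inter]; exact ⟨⟨hz, h1⟩, h2⟩))
          · exact Finset.mem_union_right _ (Finset.mem_sdiff.mpr ⟨hz, h2⟩)
        · exact Finset.mem_union_left _
            (Finset.mem_union_right _ (Finset.mem_sdiff.mpr ⟨hz, h1⟩))
      have hXlow : lam ≤ X.card + ((N u ∩ N v) \ insert a (N a)).card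
          + ((N u ∩ N v) \ insert b (N b)).card := by
        calc lam = (N u ∩ N v).card := (hlam u v hadj).symm
          _ ≤ (X ∪ ((N u ∩ N v) \ insert a (N a))
              ∪ ((N u ∩ N v) \ insert b (N b))).card := Finset.card_le_card hcover3
          _ ≤ (X ∪ ((N u ∩ N v) \ insert a (N a))).card
              + ((N u ∩ N v) \ insert b (N b)).card := Finset.card_union_le _ _
          _ ≤ X.card + ((N u ∩ N v) \ insert a (N a)).card
              + ((N u ∩ N v) \ insert b (N b)).card := by
              have := Finset.card_union_le X ((N u ∩ N v) \ insert a (N a))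
              omega
      -- the attached bounds for a and b
      have hPa : (((N u ∩ N v) \ (insert a (N a))).card : ℝ) ≤ 2*Q*mu + 1 := by
        have := (Finset.mem_filter.mp ha).2
        exact this
      have hPb : (((N u ∩ N v) \ (insert b (N b))).card : ℝ) ≤ 2*Q*mu + 1 := by
        have := (Finset.mem_filter.mp hb).2
        exact this
      -- T := {u, v} ∪ (X minus a b) is a set of common neighbours of a, b
      set T := insert u (insert v ((X.erase a).erase b)) with hT
      have hTsub : T ⊆ N a ∩ N b := by
        intro z hz
        rw [hT] at hz
        rcases Finset.mem_insert.mp hz with rfl | hz'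
        · rw [Finset.mem_inter, SimpleGraph.mem_neighborFinset,
            SimpleGraph.mem_neighborFinset]
          exact ⟨haa.1.symm, hbb.1.symm⟩
        rcases Finset.mem_insert.mp hz' with rfl | hz''
        · rw [Finset.mem_inter, SimpleGraph.mem_neighborFinset,
            SimpleGraph.mem_neighborFinset]
          exact ⟨haa.2.symm, hbb.2.symm⟩
        · have hzb : z ≠ b := (Finset.mem_erase.mp hz'').1
          have hz3 := (Finset.mem_erase.mp hz'').2
          have hza : z ≠ a := (Finset.mem_erase.mp hz3).1
          have hz4 := (Finset.mem_erase.mp hz3).2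
          rw [hX, Finset.mem_inter, Finset.mem_inter] at hz4
          rw [Finset.mem_inter]
          constructor
          · rcases Finset.mem_insert.mp hz4.1.2 with rfl | h
            · exact absurd rfl hza
            · exact h
          · rcases Finset.mem_insert.mp hz4.2 with rfl | h
            · exact absurd rfl hzb
            · exact h
      have hXsubΛ : (X.erase a).erase b ⊆ N u ∩ N v := by
        intro z hz
        have hz3 := (Finset.mem_erase.mp hz).2
        have hz4 := (Finset.mem_erase.mp hz3).2
        rw [hX] at hz4
        exact (Finset.mem_inter.mp (Finset.mem_inter.mp hz4).1).1
      have hucard : u ∉ insert v ((X.erase a).erase b) := by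
        rw [Finset.mem_insert]
        rintro (rfl | h)
        · exact huv rfl
        · exact hunotΛ (hXsubΛ h)
      have hvcard : v ∉ (X.erase a).erase b := fun h => hvnotΛ (hXsubΛ h)
      have hTcard : T.card = ((X.erase a).erase b).card + 2 := by
        rw [hT, Finset.card_insert_of_notMem hucard,
          Finset.card_insert_of_notMem hvcard]
      have hXe : X.card ≤ ((X.erase a).erase b).card + 2 := by
        have h1 := Finset.pred_card_le_card_erase (s := X) (a := a)
        have h2 := Finset.pred_card_le_card_erase (s := X.erase a) (a := b)
        omega
      have hmucontra : X.card ≤ mu := by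
        calc X.card ≤ ((X.erase a).erase b).card + 2 := hXe
          _ = T.card := hTcard.symm
          _ ≤ (N a ∩ N b).card := Finset.card_le_card hTsub
          _ ≤ mu := hle
      -- numeric contradiction
      have hXR : ((X.card : ℝ)) ≥ (lam:ℝ) - (2*Q*mu + 1) - (2*Q*mu + 1) := by
        have : (lam:ℝ) ≤ (X.card : ℝ) + (((N u ∩ N v) \ insert a (N a)).card : ℝ)
            + (((N u ∩ N v) \ insert b (N b)).card : ℝ) := by exact_mod_cast hXlow
        linarith
      have hXmuR : ((X.card : ℝ)) ≤ (mu:ℝ) := by exact_mod_cast hmucontra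
      nlinarith
  · -- cardinality
    have h1 : v ∉ att := fun h => hvnotΛ (hattΛ h)
    have h2 : u ∉ insert v att := by
      rw [Finset.mem_insert]
      rintro (rfl | h)
      · exact huv rfl
      · exact hunotΛ (hattΛ h)
    rw [Finset.card_insert_of_notMem h2, Finset.card_insert_of_notMem h1]
    have : (att.card : ℝ) ≥ (lam:ℝ) - 2*Q*mu := by
      have hcast : (att.card : ℝ) + (bad.card : ℝ) = (lam : ℝ) := by exact_mod_cast hattcard
      linarith
    push_cast
    linarith

-- a maximal clique of large size containing an edge is unique
lemma unique_line
    (hlam : ∀ u v : V, G.Adj u v → (G.neighborFinset u ∩ G.neighborFinset v).card = lam)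
    (hmu2 : ∀ y z : V, y ≠ z → ¬G.Adj y z → (∃ w, G.Adj y w ∧ G.Adj w z) →
      (G.neighborFinset y ∩ G.neighborFinset z).card ≤ mu)
    (hQ1 : 1 ≤ Q) (hmu1 : 1 ≤ mu) (hlam1 : 1 ≤ lam) (hQmu : Q * mu ≤ lam/100)
    {u v : V} (hadj : G.Adj u v) {M M' : Finset V}
    (hMcl : G.IsClique (M : Set V))
    (hMmax : ∀ d : Finset V, G.IsClique (d : Set V) → M ⊆ d → M = d)
    (hMcard : (lam:ℝ) + 2 - 2*Q*mu ≤ M.card)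
    (hM'cl : G.IsClique (M' : Set V))
    (hM'max : ∀ d : Finset V, G.IsClique (d : Set V) → M' ⊆ d → M' = d)
    (hM'card : (lam:ℝ) + 2 - 2*Q*mu ≤ M'.card)
    (huM : u ∈ M) (hvM : v ∈ M) (huM' : u ∈ M') (hvM' : v ∈ M') :
    M = M' := by
  classical
  have hmuR : (1:ℝ) ≤ (mu:ℝ) := by exact_mod_cast hmu1
  have hlamR : (1:ℝ) ≤ (lam:ℝ) := by exact_mod_cast hlam1
  have hQmu1 : (1:ℝ) ≤ Q * mu := by nlinarith
  by_contra hne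
  -- M is not contained in M'
  have hnsub : ¬ M ⊆ M' := by
    intro hsub
    exact hne (hMmax M' hM'cl hsub)
  obtain ⟨w, hwM, hwM'⟩ := Finset.not_subset.mp hnsub
  -- there is x ∈ M' non-adjacent to w
  have hx : ∃ x ∈ M', x ≠ w ∧ ¬G.Adj w x := by
    by_contra hcon
    push_neg at hcon
    have hcl : G.IsClique ((insert w M' : Finset V) : Set V) := by
      intro p hp q hq hpq
      simp only [Finset.coe_insert, Set.mem_insert_iff, Finset.mem_coe] at hp hq
      rcases hp with rfl | hp <;> rcases hq with rfl | hq
      · exact absurd rfl hpq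
      · exact hcon q hq (fun h => hpq h.symm)
      · exact (hcon p hp (fun h => hpq h)).symm
      · exact hM'cl hp hq hpq
    have := hM'max _ hcl (Finset.subset_insert _ _)
    rw [← this] at hcl
    exact hwM' (by rw [this]; exact Finset.mem_insert_self _ _)
  obtain ⟨x, hxM', hxw, hnadj⟩ := hx
  -- both cliques live in {u, v} ∪ Λ(u,v)
  set S := insert u (insert v (G.neighborFinset u ∩ G.neighborFinset v)) with hS
  have hMS : M ⊆ S := by
    intro z hz
    rw [hS, Finset.mem_insert, Finset.mem_insert]
    by_cases h1 : z = u
    · exact Or.inl h1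
    by_cases h2 : z = v
    · exact Or.inr (Or.inl h2)
    refine Or.inr (Or.inr ?_)
    rw [Finset.mem_inter, SimpleGraph.mem_neighborFinset, SimpleGraph.mem_neighborFinset]
    exact ⟨hMcl huM hz (fun h => h1 h.symm), hMcl hvM hz (fun h => h2 h.symm)⟩
  have hM'S : M' ⊆ S := by
    intro z hz
    rw [hS, Finset.mem_insert, Finset.mem_insert]
    by_cases h1 : z = u
    · exact Or.inl h1
    by_cases h2 : z = v
    · exact Or.inr (Or.inl h2)
    refine Or.inr (Or.inr ?_)
    rw [Finset.mem_inter, SimpleGraph.mem_neighborFinset, SimpleGraph.mem_neighborFinset]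
    exact ⟨hM'cl huM' hz (fun h => h1 h.symm), hM'cl hvM' hz (fun h => h2 h.symm)⟩
  have hScard : (S.card : ℝ) ≤ (lam:ℝ) + 2 := by
    have h1 : S.card ≤ lam + 2 := by
      calc S.card ≤ (insert v (G.neighborFinset u ∩ G.neighborFinset v)).card + 1 :=
            Finset.card_insert_le _ _
        _ ≤ ((G.neighborFinset u ∩ G.neighborFinset v).card + 1) + 1 := by
            have := Finset.card_insert_le v (G.neighborFinset u ∩ G.neighborFinset v)
            omega
        _ = lam + 2 := by rw [hlam u v hadj]
    exact_mod_cast h1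
  have hinter : ((M ∩ M').card : ℝ) ≥ (lam:ℝ) + 2 - 4*Q*mu := by
    have h1 : (M ∪ M').card + (M ∩ M').card = M.card + M'.card :=
      Finset.card_union_add_card_inter M M'
    have h2 : (M ∪ M').card ≤ S.card :=
      Finset.card_le_card (Finset.union_subset hMS hM'S)
    have h1R : ((M ∪ M').card : ℝ) + ((M ∩ M').card : ℝ)
        = (M.card : ℝ) + (M'.card : ℝ) := by exact_mod_cast h1
    have h2R : ((M ∪ M').card : ℝ) ≤ (S.card : ℝ) := by exact_mod_cast h2
    linarith
  -- common neighbours of w and x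
  have hsub3 : ((M ∩ M').erase w).erase x ⊆ G.neighborFinset w ∩ G.neighborFinset x := by
    intro z hz
    have hzx : z ≠ x := (Finset.mem_erase.mp hz).1
    have hz2 := (Finset.mem_erase.mp hz).2
    have hzw : z ≠ w := (Finset.mem_erase.mp hz2).1
    have hz3 := (Finset.mem_erase.mp hz2).2
    rw [Finset.mem_inter] at hz3
    rw [Finset.mem_inter, SimpleGraph.mem_neighborFinset, SimpleGraph.mem_neighborFinset]
    exact ⟨hMcl hwM hz3.1 (fun h => hzw h.symm), hM'cl hxM' hz3.2 (fun h => hzx h.symm)⟩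
  have hbig2 : ((G.neighborFinset w ∩ G.neighborFinset x).card : ℝ)
      ≥ (lam:ℝ) - 4*Q*mu := by
    have h1 : (M ∩ M').card ≤ (((M ∩ M').erase w).erase x).card + 2 := by
      have ha := Finset.pred_card_le_card_erase (s := M ∩ M') (a := w)
      have hb := Finset.pred_card_le_card_erase (s := (M ∩ M').erase w) (a := x)
      omega
    have h2 := Finset.card_le_card hsub3
    have h1R : ((M ∩ M').card:ℝ) ≤ ((((M ∩ M').erase w).erase x).card : ℝ) + 2 := by
      exact_mod_cast h1
    have h2R : ((((M ∩ M').erase w).erase x).card : ℝ)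
        ≤ ((G.neighborFinset w ∩ G.neighborFinset x).card : ℝ) := by exact_mod_cast h2
    linarith
  -- a common neighbour exists
  have hwx2 : ∃ z, G.Adj w z ∧ G.Adj z x := by
    have hpos : (0:ℝ) < ((G.neighborFinset w ∩ G.neighborFinset x).card : ℝ) := by
      nlinarith
    have : (G.neighborFinset w ∩ G.neighborFinset x).Nonempty := by
      rw [← Finset.card_pos]
      exact_mod_cast hpos
    obtain ⟨z, hz⟩ := this
    rw [Finset.mem_inter, SimpleGraph.mem_neighborFinset, SimpleGraph.mem_neighborFinset] at hz
    exact ⟨z, hz.1, hz.2.symm⟩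
  have hfinal : ((G.neighborFinset w ∩ G.neighborFinset x).card : ℝ) ≤ (mu : ℝ) := by
    exact_mod_cast hmu2 w x (fun h => hxw h.symm) hnadj hwx2
  nlinarith

end core

end gluedaux2

set_option maxHeartbeats 1600000

/-- **Theorem** (ε–δ rendering): a distance-regular graph with `|s|μ = o(λ)` is asymptotically
Delsarte-geometric: it has a clique geometry whose members have order `∼ k/|s|`. -/
theorem asymptotically_delsarte_geometric :
    ∀ ε : ℝ, 0 < ε → ∃ δ : ℝ, 0 < δ ∧
      ∀ (V : Type*) [Fintype V] [DecidableEq V] (G : SimpleGraph V) [DecidableRel G.Adj]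
        (b c : ℕ → ℕ) (k lam mu : ℕ) (s : ℝ),
        IsDistanceRegular G b c → G.IsRegularOfDegree k → 1 ≤ k →
        (∀ u v : V, G.Adj u v → (G.neighborFinset u ∩ G.neighborFinset v).card = lam) →
        1 ≤ lam →
        (∀ u v : V, G.dist u v = 2 → (G.neighborFinset u ∩ G.neighborFinset v).card = mu) →
        1 ≤ mu →
        IsAdjEigenvalue G s → (∀ θ : ℝ, IsAdjEigenvalue G θ → s ≤ θ) →
        |s| * (mu : ℝ) ≤ δ * (lam : ℝ) →
        ∃ C : Set (Finset V), IsCliqueGeometry G C ∧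
          ∀ cl ∈ C, (1 - ε) * ((k : ℝ) / |s|) ≤ (cl.card : ℝ) ∧
            (cl.card : ℝ) ≤ (1 + ε) * ((k : ℝ) / |s|) := by
  intro ε hε
  set εp := min ε 1 with hεpdef
  have hεp0 : 0 < εp := lt_min hε one_pos
  have hεple : εp ≤ ε := min_le_left _ _
  have hεp1 : εp ≤ 1 := min_le_right _ _
  refine ⟨εp/100, by positivity, ?_⟩
  intro V _ _ G _ b c k lam mu s hdrg hreg hk1 hlam hlam1 hmu hmu1 hseig hsmin hcond
  classical
  have hconn := hdrg.1
  have hreg' : ∀ a : V, (G.neighborFinset a).card = k := fun a => hreg a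
  have hRQ := rayleigh G s hsmin
  have hedge : ∀ u : V, ∃ v, G.Adj u v := by
    intro u
    have hpos : 0 < (G.neighborFinset u).card := by rw [hreg' u]; omega
    obtain ⟨v, hv⟩ := Finset.card_pos.mp hpos
    exact ⟨v, (SimpleGraph.mem_neighborFinset _ _ _).mp hv⟩
  have hVne : Nonempty V := hconn.nonempty
  obtain ⟨u0⟩ := hVne
  obtain ⟨v0, hv0⟩ := hedge u0
  have hsle : s ≤ -1 := s_le_neg_one G hRQ hv0
  set Q := -s with hQdef
  have hQ1 : 1 ≤ Q := by rw [hQdef]; linarith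
  have hQpos : 0 < Q := lt_of_lt_of_le zero_lt_one hQ1
  have habs : |s| = Q := by rw [hQdef, abs_of_nonpos (by linarith)]
  have hmuR : (1:ℝ) ≤ (mu:ℝ) := by exact_mod_cast hmu1
  have hlamR : (1:ℝ) ≤ (lam:ℝ) := by exact_mod_cast hlam1
  have hkR : (1:ℝ) ≤ (k:ℝ) := by exact_mod_cast hk1
  have hcond' : Q * mu ≤ (εp/100) * lam := by rw [← habs]; exact hcond
  have hQmu1 : (1:ℝ) ≤ Q * mu := by nlinarith
  have hdl1 : (1:ℝ) ≤ (εp/100) * lam := le_trans hQmu1 hcond'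
  have hQmu : Q * mu ≤ (lam:ℝ)/100 := by nlinarith
  have hQδ : Q ≤ (εp/100) * lam := by nlinarith
  have hkQ : (k:ℝ) ≤ Q*Q + Q*lam := by
    have h := k_le_bound G hRQ hreg' hlam hsle hk1 u0
    calc (k:ℝ) ≤ s^2 - s * lam := h
      _ = Q*Q + Q*lam := by rw [hQdef]; ring
  have hmu2 : ∀ y z : V, y ≠ z → ¬G.Adj y z → (∃ w, G.Adj y w ∧ G.Adj w z) →
      (G.neighborFinset y ∩ G.neighborFinset z).card ≤ mu := by
    rintro y z hne hnadj ⟨w, h1, h2⟩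
    rw [hmu y z (dist_two G h1 h2 hne hnadj)]
  -- the clique geometry
  set C : Set (Finset V) :=
    {M | IsMaximalClique G M ∧ (lam:ℝ) + 2 - 2*Q*(mu:ℝ) ≤ M.card} with hCdef
  have hline : ∀ u v : V, G.Adj u v → ∃ M, (M ∈ C ∧ u ∈ M ∧ v ∈ M) := by
    intro u v huv
    obtain ⟨K, hKcl, huK, hvK, hKcard⟩ :=
      attached_clique hreg' hlam hmu2 hQ1 hmu1 hlam1 hkQ hQmu huv
    obtain ⟨M, ⟨hMcl, hMmax⟩, hKM⟩ := exists_maximal_clique G K hKcl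
    refine ⟨M, ⟨⟨hMcl, hMmax⟩, ?_⟩, hKM huK, hKM hvK⟩
    calc (lam:ℝ) + 2 - 2*Q*(mu:ℝ) ≤ (K.card : ℝ) := hKcard
      _ ≤ (M.card : ℝ) := by exact_mod_cast Finset.card_le_card hKM
  have hgeom : IsCliqueGeometry G C := by
    refine ⟨fun M hM => hM.1, ?_⟩
    intro u v huv
    obtain ⟨M0, hM0⟩ := hline u v huv
    refine ⟨M0, hM0, ?_⟩
    rintro M' ⟨hM'C, huM', hvM'⟩
    exact unique_line hlam hmu2 hQ1 hmu1 hlam1 hQmu huv hM'C.1.1 hM'C.1.2 hM'C.2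
      hM0.1.1.1 hM0.1.1.2 hM0.1.2 huM' hvM' hM0.2.1 hM0.2.2
  -- the finite family of lines
  set CF : Finset (Finset V) := Finset.univ.powerset.filter (fun M => M ∈ C) with hCFdef
  have hmemCF : ∀ M : Finset V, M ∈ CF ↔ M ∈ C := by
    intro M
    simp [hCFdef, Finset.mem_filter, Finset.mem_powerset, Finset.subset_univ]
  have huniqcard : ∀ u v : V, G.Adj u v →
      (CF.filter (fun M => u ∈ M ∧ v ∈ M)).card = 1 := by
    intro u v huv
    obtain ⟨M0, hM0, hM0u⟩ := hgeom.2 u v huv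
    rw [Finset.card_eq_one]
    refine ⟨M0, ?_⟩
    ext M
    simp only [Finset.mem_filter, Finset.mem_singleton]
    constructor
    · rintro ⟨hMCF, hu, hv⟩
      exact hM0u M ⟨(hmemCF M).mp hMCF, hu, hv⟩
    · rintro rfl
      exact ⟨(hmemCF _).mpr hM0.1, hM0.2.1, hM0.2.2⟩
  -- eigenvalue bound on the number of lines through a vertex
  obtain ⟨x, hx0, hxe⟩ := hseig
  obtain ⟨a, haQ⟩ := geom_eig_bound G CF
    (fun M hM => ((hmemCF M).mp hM).1.1) huniqcard hx0 hxe
  set F : Finset (Finset V) := CF.filter (fun M => a ∈ M) with hFdef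
  have hJnn : (0:ℝ) ≤ 2*Q*(mu:ℝ) := by positivity
  have hJle : 2*Q*(mu:ℝ) ≤ (lam:ℝ)/50 := by nlinarith
  have hlampos : (0:ℝ) ≤ (lam:ℝ) + 1 - 2*Q*(mu:ℝ) := by nlinarith
  have hkflower : Q * ((lam:ℝ) + 1 - 2*Q*(mu:ℝ)) ≤ (k:ℝ) := by
    have hdisj : ∀ M ∈ F, ∀ M' ∈ F, M ≠ M' →
        Disjoint (M.erase a) (M'.erase a) := by
      intro M hM M' hM' hne
      rw [Finset.disjoint_left]
      intro z hz hz'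
      have hza : z ≠ a := (Finset.mem_erase.mp hz).1
      have hzM : z ∈ M := (Finset.mem_erase.mp hz).2
      have hzM' : z ∈ M' := (Finset.mem_erase.mp hz').2
      have hMmem := (hmemCF M).mp (Finset.mem_filter.mp hM).1
      have hM'mem := (hmemCF M').mp (Finset.mem_filter.mp hM').1
      have haM : a ∈ M := (Finset.mem_filter.mp hM).2
      have haM' : a ∈ M' := (Finset.mem_filter.mp hM').2
      have hadjaz : G.Adj a z := hMmem.1.1 haM hzM (fun h => hza h.symm)
      obtain ⟨W, hW, hWu⟩ := hgeom.2 a z hadjaz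
      have e1 : M = W := (hWu M ⟨hMmem, haM, hzM⟩).symm ▸ rfl
      have e2 : M' = W := (hWu M' ⟨hM'mem, haM', hzM'⟩).symm ▸ rfl
      rw [hWu M ⟨hMmem, haM, hzM⟩, hWu M' ⟨hM'mem, haM', hzM'⟩] at hne
      exact hne rfl
    have herasesub : F.biUnion (fun M => M.erase a) ⊆ G.neighborFinset a := by
      intro z hz
      obtain ⟨M, hM, hzM⟩ := Finset.mem_biUnion.mp hz
      have hza : z ≠ a := (Finset.mem_erase.mp hzM).1
      have hzM2 : z ∈ M := (Finset.mem_erase.mp hzM).2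
      have hMmem := (hmemCF M).mp (Finset.mem_filter.mp hM).1
      have haM : a ∈ M := (Finset.mem_filter.mp hM).2
      rw [SimpleGraph.mem_neighborFinset]
      exact hMmem.1.1 haM hzM2 (fun h => hza h.symm)
    have hsumk : ∑ M ∈ F, (M.erase a).card ≤ k := by
      rw [← Finset.card_biUnion hdisj]
      calc (F.biUnion (fun M => M.erase a)).card
          ≤ (G.neighborFinset a).card := Finset.card_le_card herasesub
        _ = k := hreg' a
    have hterm : ∀ M ∈ F, (lam:ℝ) + 1 - 2*Q*(mu:ℝ) ≤ ((M.erase a).card : ℝ) := by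
      intro M hM
      have hMmem := (hmemCF M).mp (Finset.mem_filter.mp hM).1
      have haM : a ∈ M := (Finset.mem_filter.mp hM).2
      have hcard := hMmem.2
      have : (M.erase a).card = M.card - 1 := Finset.card_erase_of_mem haM
      have hM1 : 1 ≤ M.card := Finset.card_pos.mpr ⟨a, haM⟩
      have : ((M.erase a).card : ℝ) = (M.card : ℝ) - 1 := by
        rw [this, Nat.cast_sub hM1]; norm_num
      rw [this]
      linarith
    have hsmul : (F.card : ℝ) * ((lam:ℝ) + 1 - 2*Q*(mu:ℝ))
        ≤ ∑ M ∈ F, ((M.erase a).card : ℝ) := by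
      have := Finset.card_nsmul_le_sum F (fun M => ((M.erase a).card : ℝ))
        ((lam:ℝ) + 1 - 2*Q*(mu:ℝ)) hterm
      rwa [nsmul_eq_mul] at this
    have hsumR : ∑ M ∈ F, ((M.erase a).card : ℝ) ≤ (k:ℝ) := by
      calc ∑ M ∈ F, ((M.erase a).card : ℝ) = ((∑ M ∈ F, (M.erase a).card : ℕ) : ℝ) := by
            push_cast; rfl
        _ ≤ (k:ℝ) := by exact_mod_cast hsumk
    have hQF : Q ≤ (F.card : ℝ) := by rw [hQdef] at *; exact haQ
    calc Q * ((lam:ℝ) + 1 - 2*Q*(mu:ℝ))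
        ≤ (F.card : ℝ) * ((lam:ℝ) + 1 - 2*Q*(mu:ℝ)) :=
          mul_le_mul_of_nonneg_right hQF hlampos
      _ ≤ ∑ M ∈ F, ((M.erase a).card : ℝ) := hsmul
      _ ≤ (k:ℝ) := hsumR
  -- conclusion
  refine ⟨C, hgeom, ?_⟩
  intro cl hcl
  obtain ⟨⟨hclcl, hclmax⟩, hclcard⟩ := hcl
  have h2cl : 1 < cl.card := by
    have : (1:ℝ) < (cl.card : ℝ) := by nlinarith
    exact_mod_cast this
  obtain ⟨u1, hu1, v1, hv1, hne1⟩ := Finset.one_lt_card.mp h2cl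
  have hadj1 : G.Adj u1 v1 := hclcl hu1 hv1 hne1
  have hclsub : cl ⊆ insert u1 (insert v1 (G.neighborFinset u1 ∩ G.neighborFinset v1)) := by
    intro z hz
    rw [Finset.mem_insert, Finset.mem_insert]
    by_cases e1 : z = u1
    · exact Or.inl e1
    by_cases e2 : z = v1
    · exact Or.inr (Or.inl e2)
    refine Or.inr (Or.inr ?_)
    rw [Finset.mem_inter, SimpleGraph.mem_neighborFinset, SimpleGraph.mem_neighborFinset]
    exact ⟨hclcl hu1 hz (fun h => e1 h.symm), hclcl hv1 hz (fun h => e2 h.symm)⟩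
  have hclup : (cl.card : ℝ) ≤ (lam:ℝ) + 2 := by
    have h1 : cl.card ≤ lam + 2 := by
      calc cl.card ≤ (insert u1 (insert v1 (G.neighborFinset u1 ∩ G.neighborFinset v1))).card :=
            Finset.card_le_card hclsub
        _ ≤ (insert v1 (G.neighborFinset u1 ∩ G.neighborFinset v1)).card + 1 :=
            Finset.card_insert_le _ _
        _ ≤ ((G.neighborFinset u1 ∩ G.neighborFinset v1).card + 1) + 1 := by
            have := Finset.card_insert_le v1 (G.neighborFinset u1 ∩ G.neighborFinset v1)
            omega
        _ = lam + 2 := by rw [hlam u1 v1 hadj1]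
    exact_mod_cast h1
  rw [habs]
  have hkQnn : (0:ℝ) ≤ (k:ℝ)/Q := by positivity
  constructor
  · -- lower bound
    have h1 : (1 - ε) * ((k:ℝ)/Q) ≤ (1 - εp) * ((k:ℝ)/Q) :=
      mul_le_mul_of_nonneg_right (by linarith) hkQnn
    have hkoverQ : (k:ℝ)/Q ≤ (lam:ℝ) + (εp/100)*lam := by
      rw [div_le_iff₀ hQpos]
      nlinarith
    have h2 : (1 - εp) * ((k:ℝ)/Q) ≤ (1 - εp) * ((lam:ℝ) + (εp/100)*lam) :=
      mul_le_mul_of_nonneg_left hkoverQ (by linarith)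
    have hJδ : 2*Q*(mu:ℝ) ≤ 2*(εp/100)*lam := by nlinarith
    have h3 : (1 - εp) * ((lam:ℝ) + (εp/100)*lam) ≤ (lam:ℝ) + 2 - 2*Q*(mu:ℝ) := by
      nlinarith [mul_nonneg (le_of_lt hεp0) (mul_nonneg (le_of_lt hεp0) (by linarith : (0:ℝ) ≤ (lam:ℝ)))]
    calc (1 - ε) * ((k:ℝ)/Q) ≤ (1 - εp) * ((k:ℝ)/Q) := h1
      _ ≤ (1 - εp) * ((lam:ℝ) + (εp/100)*lam) := h2
      _ ≤ (lam:ℝ) + 2 - 2*Q*(mu:ℝ) := h3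
      _ ≤ (cl.card : ℝ) := hclcard
  · -- upper bound
    have h1 : (1 + εp) * ((k:ℝ)/Q) ≤ (1 + ε) * ((k:ℝ)/Q) :=
      mul_le_mul_of_nonneg_right (by linarith) hkQnn
    have hkoverQ : (lam:ℝ) + 1 - 2*Q*(mu:ℝ) ≤ (k:ℝ)/Q := by
      rw [le_div_iff₀ hQpos]
      nlinarith
    have h2 : (1 + εp) * ((lam:ℝ) + 1 - 2*Q*(mu:ℝ)) ≤ (1 + εp) * ((k:ℝ)/Q) :=
      mul_le_mul_of_nonneg_left hkoverQ (by linarith)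
    have hJδ : 2*Q*(mu:ℝ) ≤ 2*(εp/100)*lam := by nlinarith
    have h3 : (lam:ℝ) + 2 ≤ (1 + εp) * ((lam:ℝ) + 1 - 2*Q*(mu:ℝ)) := by
      nlinarith
    calc (cl.card : ℝ) ≤ (lam:ℝ) + 2 := hclup
      _ ≤ (1 + εp) * ((lam:ℝ) + 1 - 2*Q*(mu:ℝ)) := h3
      _ ≤ (1 + εp) * ((k:ℝ)/Q) := h2
      _ ≤ (1 + ε) * ((k:ℝ)/Q) := h1
end

section
/- Let G be a finite simple graph on k vertices which is regular of degree λ and such that any pair of distinct nonadjacent vertices has at most μ − 1 common neighbors. Then for any vertex u of G, the number of ordered pairs (x, y) of distinct nonadjacent vertices with x and y both in the neighborhood N(u) is at most (k − λ − 1)·(μ − 1). -/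
open Finset

/-- **Spielman's lemma**: in a `λ`-regular graph on `k` vertices in which nonadjacent vertices
have at most `μ - 1` common neighbors, the neighborhood of any vertex contains at most
`(k - λ - 1)(μ - 1)` ordered pairs of nonadjacent vertices. -/
theorem spielman_nonadjacent_pairs {V : Type*} [Fintype V] [DecidableEq V] (G : SimpleGraph V)
    [DecidableRel G.Adj] (k lam mu : ℕ)
    (hcard : Fintype.card V = k) (hreg : G.IsRegularOfDegree lam)
    (hmu : ∀ x y : V, x ≠ y → ¬ G.Adj x y →
      (G.neighborFinset x ∩ G.neighborFinset y).card ≤ mu - 1)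
    (u : V) :
    ((G.neighborFinset u ×ˢ G.neighborFinset u).filter fun p =>
        p.1 ≠ p.2 ∧ ¬ G.Adj p.1 p.2).card ≤ (k - lam - 1) * (mu - 1) := by
  classical
  set S := G.neighborFinset u with hS
  set T := Finset.univ \ insert u S with hT
  have huS : u ∉ S := by simp [hS]
  have hScard : S.card = lam := by simp [hS, hreg u]
  have hTcard : T.card = k - lam - 1 := by
    rw [hT, Finset.card_sdiff_of_subset (Finset.subset_univ _), Finset.card_univ, hcard,
      Finset.card_insert_of_notMem huS, hScard]
    omega
  -- pointwise: for x ∈ S, nonneighbors of x in S correspond in number to neighbors of x in T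
  have key : ∀ x ∈ S, (S.filter fun y => x ≠ y ∧ ¬ G.Adj x y).card
      = (T.filter fun y => G.Adj x y).card := by
    intro x hx
    have hxu : G.Adj x u := (G.mem_neighborFinset u x).1 hx |>.symm
    have huN : u ∈ G.neighborFinset x := (G.mem_neighborFinset x u).2 hxu
    have hxN : x ∉ G.neighborFinset x := by simp
    have huSN : u ∉ S ∩ G.neighborFinset x := by simp [huS]
    have hxSN : x ∉ S ∩ G.neighborFinset x := by simp [hxN]
    have hL : (S.filter fun y => x ≠ y ∧ ¬ G.Adj x y)
        = S \ insert x (S ∩ G.neighborFinset x) := by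
      ext y
      simp only [Finset.mem_filter, Finset.mem_sdiff, Finset.mem_insert, Finset.mem_inter,
        SimpleGraph.mem_neighborFinset]
      constructor
      · rintro ⟨hy, hne, hna⟩
        exact ⟨hy, by tauto⟩
      · rintro ⟨hy, h⟩
        push_neg at h
        exact ⟨hy, fun h' => h.1 h'.symm, fun h' => h.2 hy h'⟩
    have hR : (T.filter fun y => G.Adj x y)
        = G.neighborFinset x \ insert u (S ∩ G.neighborFinset x) := by
      ext y
      simp only [hT, Finset.mem_filter, Finset.mem_sdiff, Finset.mem_insert, Finset.mem_inter,
        SimpleGraph.mem_neighborFinset, Finset.mem_univ, true_and, Finset.mem_sdiff]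
      tauto
    have hsub1 : insert x (S ∩ G.neighborFinset x) ⊆ S :=
      Finset.insert_subset hx (Finset.inter_subset_left)
    have hsub2 : insert u (S ∩ G.neighborFinset x) ⊆ G.neighborFinset x :=
      Finset.insert_subset huN (Finset.inter_subset_right)
    rw [hL, hR, Finset.card_sdiff_of_subset hsub1, Finset.card_sdiff_of_subset hsub2,
      Finset.card_insert_of_notMem hxSN, Finset.card_insert_of_notMem huSN, hScard]
    have : (G.neighborFinset x).card = lam := by
      rw [G.card_neighborFinset_eq_degree x, hreg x]
    rw [this]
  -- rewrite both product-filter cards as double sums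
  have hA : ((S ×ˢ S).filter fun p => p.1 ≠ p.2 ∧ ¬ G.Adj p.1 p.2).card
      = ∑ x ∈ S, (S.filter fun y => x ≠ y ∧ ¬ G.Adj x y).card := by
    rw [Finset.card_filter, Finset.sum_product]
    exact Finset.sum_congr rfl fun x _ => (Finset.card_filter _ _).symm
  have hB : ((S ×ˢ T).filter fun p => G.Adj p.1 p.2).card
      = ∑ x ∈ S, (T.filter fun y => G.Adj x y).card := by
    rw [Finset.card_filter, Finset.sum_product]
    exact Finset.sum_congr rfl fun x _ => (Finset.card_filter _ _).symm
  have hB' : ((S ×ˢ T).filter fun p => G.Adj p.1 p.2).card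
      = ∑ y ∈ T, (S.filter fun x => G.Adj x y).card := by
    rw [Finset.card_filter, Finset.sum_product, Finset.sum_comm]
    exact Finset.sum_congr rfl fun y _ => (Finset.card_filter _ _).symm
  have hAB : ((S ×ˢ S).filter fun p => p.1 ≠ p.2 ∧ ¬ G.Adj p.1 p.2).card
      = ((S ×ˢ T).filter fun p => G.Adj p.1 p.2).card := by
    rw [hA, hB]
    exact Finset.sum_congr rfl key
  rw [hAB, hB']
  calc ∑ y ∈ T, (S.filter fun x => G.Adj x y).card
      ≤ ∑ y ∈ T, (mu - 1) := by
        apply Finset.sum_le_sum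
        intro y hy
        have hy' : y ∉ insert u S := (Finset.mem_sdiff.1 (hT ▸ hy)).2
        have hyu : u ≠ y := fun h => hy' (by simp [h])
        have hyadj : ¬ G.Adj u y := fun h => hy' (by simp [hS, (G.mem_neighborFinset u y).2 h])
        refine le_trans (Finset.card_le_card ?_) (hmu u y hyu hyadj)
        intro x hx
        obtain ⟨hxS, hxa⟩ := Finset.mem_filter.1 hx
        exact Finset.mem_inter.2 ⟨hxS, (G.mem_neighborFinset y x).2 hxa.symm⟩
    _ = (k - lam - 1) * (mu - 1) := by rw [Finset.sum_const, hTcard, smul_eq_mul]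
end

section
/- For every real ε > 0 there exists a real δ > 0 such that the following holds: if G is a finite simple graph on k vertices which is regular of degree λ, any pair of distinct nonadjacent vertices of G has at most μ − 1 common neighbors where μ ≥ 1, and k·μ ≤ δ·λ², then the vertex set of G can be partitioned into maximal cliques each of order between (1 − ε)·λ and (1 + ε)·λ, and every maximal clique of G not belonging to this partition has order at most ε·λ. -/
open Finset

set_option maxHeartbeats 1600000 in
/-- **Clique Partition Lemma** (ε–δ rendering): in a `λ`-regular graph on `k` vertices where
nonadjacent vertices have at most `μ - 1` common neighbors and `kμ = o(λ²)`, the vertex set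
partitions into maximal cliques of order `∼ λ`, and all other maximal cliques have order
`o(λ)`. -/
theorem clique_partition_lemma :
    ∀ ε : ℝ, 0 < ε → ∃ δ : ℝ, 0 < δ ∧
      ∀ (V : Type*) [Fintype V] [DecidableEq V] (G : SimpleGraph V) [DecidableRel G.Adj]
        (k lam mu : ℕ),
        Fintype.card V = k → G.IsRegularOfDegree lam →
        (∀ x y : V, x ≠ y → ¬ G.Adj x y →
          (G.neighborFinset x ∩ G.neighborFinset y).card ≤ mu - 1) →
        1 ≤ mu → (k : ℝ) * mu ≤ δ * (lam : ℝ) ^ 2 →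
        ∃ P : Finpartition (Finset.univ : Finset V),
          (∀ c ∈ P.parts, IsMaximalClique G c ∧
            (1 - ε) * lam ≤ (c.card : ℝ) ∧ (c.card : ℝ) ≤ (1 + ε) * lam) ∧
          ∀ c : Finset V, IsMaximalClique G c → c ∉ P.parts → (c.card : ℝ) ≤ ε * lam := by
  intro ε hε
  set e : ℝ := min ε 1 with he_def
  have he0 : 0 < e := lt_min hε one_pos
  have he1 : e ≤ 1 := min_le_right _ _
  have heε : e ≤ ε := min_le_left _ _
  refine ⟨e ^ 2 / 4096, by positivity, ?_⟩
  intro V _ _ G _ k lam mu hk hreg hmu hmu1 hkmu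
  classical
  rcases Nat.eq_zero_or_pos k with hk0 | hkpos
  · -- the graph is empty
    haveI : IsEmpty V := Fintype.card_eq_zero_iff.mp (hk.trans hk0)
    letI : DecidableRel (⊤ : Setoid V).r := fun _ _ => Classical.dec _
    refine ⟨Finpartition.ofSetoid (⊤ : Setoid V), ?_, ?_⟩
    · intro c hc
      exfalso
      simp [Finpartition.ofSetoid, Finpartition.ofSetSetoid, Finset.univ_eq_empty] at hc
    · intro c _ _
      have hc : c = ∅ := Finset.eq_empty_of_isEmpty c
      subst hc
      simp only [Finset.card_empty, Nat.cast_zero]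
      positivity
  -- main case
  · have hV : Nonempty V := Fintype.card_pos_iff.mp (hk ▸ hkpos)
    set D : ℝ := e ^ 2 / 4096 with hD_def
    set L : ℝ := (lam : ℝ) with hL_def
    have hkR : (1:ℝ) ≤ (k:ℝ) := by exact_mod_cast hkpos
    have hmR : (1:ℝ) ≤ (mu:ℝ) := by exact_mod_cast hmu1
    have hlam1 : 1 ≤ lam := by
      rcases Nat.eq_zero_or_pos lam with h0 | h
      · exfalso
        have hL0' : L = 0 := by rw [hL_def, h0]; simp
        rw [hL0'] at hkmu
        nlinarith
      · exact h
    have hL1 : (1:ℝ) ≤ L := by rw [hL_def]; exact_mod_cast hlam1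
    have hL0 : (0:ℝ) < L := by linarith
    have hkL : L + 1 ≤ (k:ℝ) := by
      obtain ⟨v⟩ := hV
      have h1 : lam < k := by
        have := G.degree_lt_card_verts v
        rwa [hreg v, hk] at this
      have : lam + 1 ≤ k := h1
      rw [hL_def]; exact_mod_cast this
    have hDL : 1 < D * L := by nlinarith
    have heL : 4096 < e * L := by nlinarith
    have hLbig : 4096 < L := by nlinarith
    set N : V → Finset V := fun x => G.neighborFinset x with hN_def
    set d : V → V → ℝ := fun x y => ((N x ∩ N y).card : ℝ) with hd_def
    have hNmem : ∀ x y : V, y ∈ N x ↔ G.Adj x y := by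
      intro x y; rw [hN_def]; exact SimpleGraph.mem_neighborFinset G x y
    have hNcardN : ∀ x, (N x).card = lam := by
      intro x
      rw [hN_def]
      exact (G.card_neighborFinset_eq_degree x).trans (hreg x)
    have hNcard : ∀ x, ((N x).card : ℝ) = L := by
      intro x; rw [hNcardN x, hL_def]
    have hdsymm : ∀ x y, d x y = d y x := by
      intro x y; rw [hd_def]; simp [Finset.inter_comm]
    have hd0 : ∀ x y, 0 ≤ d x y := by
      intro x y; rw [hd_def]; positivity
    have hd_le : ∀ x y, G.Adj x y → d x y ≤ L - 1 := by
      intro x y hxy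
      have hsub : N x ∩ N y ⊆ (N x).erase y := by
        intro z hz
        obtain ⟨h1, h2⟩ := Finset.mem_inter.1 hz
        refine Finset.mem_erase.2 ⟨?_, h1⟩
        rintro rfl
        exact G.irrefl ((hNmem z z).1 h2)
      have h1 : (N x ∩ N y).card ≤ lam - 1 := by
        calc (N x ∩ N y).card ≤ ((N x).erase y).card := Finset.card_le_card hsub
        _ = (N x).card - 1 := Finset.card_erase_of_mem ((hNmem x y).2 hxy)
        _ = lam - 1 := by rw [hNcardN x]
      simp only [hd_def]
      have h2 : ((lam - 1 : ℕ) : ℝ) = L - 1 := by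
        rw [hL_def]; push_cast [Nat.cast_sub hlam1]; ring
      calc ((N x ∩ N y).card : ℝ) ≤ ((lam - 1 : ℕ) : ℝ) := by exact_mod_cast h1
      _ = L - 1 := h2
    have hmuR : (mu : ℝ) ≤ D * L := by nlinarith
    have hnonadj : ∀ x y, x ≠ y → ¬ G.Adj x y → d x y ≤ D * L := by
      intro x y hne hna
      have h1 := hmu x y hne hna
      have h2 : d x y ≤ ((mu - 1 : ℕ) : ℝ) := by
        simp only [hd_def, hN_def]; exact_mod_cast h1
      calc d x y ≤ ((mu - 1 : ℕ) : ℝ) := h2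
      _ ≤ (mu : ℝ) := by exact_mod_cast Nat.sub_le mu 1
      _ ≤ D * L := hmuR
    -- the double counting identity
    have hsum_all : ∀ u : V, ∑ w ∈ univ.erase u, (N u ∩ N w).card = lam * (lam - 1) := by
      intro u
      have step1 : ∀ w : V, (N u ∩ N w).card = ∑ x ∈ N u, if x ∈ N w then 1 else 0 := by
        intro w
        rw [← Finset.filter_mem_eq_inter, Finset.card_filter]
      calc ∑ w ∈ univ.erase u, (N u ∩ N w).card
          = ∑ w ∈ univ.erase u, ∑ x ∈ N u, (if x ∈ N w then 1 else 0) :=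
            Finset.sum_congr rfl fun w _ => step1 w
        _ = ∑ x ∈ N u, ∑ w ∈ univ.erase u, (if x ∈ N w then 1 else 0) := Finset.sum_comm
        _ = ∑ x ∈ N u, ((univ.erase u).filter (fun w => x ∈ N w)).card :=
            Finset.sum_congr rfl fun x _ => (Finset.card_filter _ _).symm
        _ = ∑ x ∈ N u, (lam - 1) := by
            refine Finset.sum_congr rfl fun x hx => ?_
            have hfe : (univ.erase u).filter (fun w => x ∈ N w) = (N x).erase u := by
              ext w
              simp only [Finset.mem_filter, Finset.mem_erase, Finset.mem_univ, true_and,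
                and_true, hN_def, SimpleGraph.mem_neighborFinset]
              rw [G.adj_comm]
            rw [hfe, Finset.card_erase_of_mem, hNcardN x]
            exact (hNmem x u).2 (((hNmem u x).1 hx).symm)
        _ = lam * (lam - 1) := by rw [Finset.sum_const, hNcardN u, smul_eq_mul]
    -- key per-vertex bound
    have hkey : ∀ u : V, ∑ w ∈ N u, (L - 1 - d u w) ≤ D * L ^ 2 := by
      intro u
      have hsub : N u ⊆ univ.erase u := by
        intro w hw
        refine Finset.mem_erase.2 ⟨?_, Finset.mem_univ w⟩
        rintro rfl
        exact G.irrefl ((hNmem w w).1 hw)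
      have hA : ∑ w ∈ univ.erase u, d u w = L * (L - 1) := by
        have h0 := hsum_all u
        have h1 : ∑ w ∈ univ.erase u, d u w
            = ((∑ w ∈ univ.erase u, (N u ∩ N w).card : ℕ) : ℝ) := by
          rw [Nat.cast_sum]
        rw [h1, h0, hL_def]
        push_cast [Nat.cast_sub hlam1]
        ring
      have hsplit := Finset.sum_sdiff (f := fun w => d u w) hsub
      have hB : ∑ w ∈ univ.erase u \ N u, d u w ≤ D * L ^ 2 := by
        have hle : ∀ w ∈ univ.erase u \ N u, d u w ≤ (mu : ℝ) := by
          intro w hw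
          obtain ⟨hw1, hw2⟩ := Finset.mem_sdiff.1 hw
          have hwu : w ≠ u := (Finset.mem_erase.1 hw1).1
          have hna : ¬ G.Adj u w := fun h => hw2 ((hNmem u w).2 h)
          have h1 := hmu u w hwu.symm hna
          have h2 : d u w ≤ ((mu - 1 : ℕ) : ℝ) := by
            simp only [hd_def, hN_def]
            exact_mod_cast h1
          calc d u w ≤ ((mu - 1 : ℕ) : ℝ) := h2
          _ ≤ (mu : ℝ) := by exact_mod_cast Nat.sub_le mu 1
        calc ∑ w ∈ univ.erase u \ N u, d u w
            ≤ (univ.erase u \ N u).card • (mu : ℝ) := Finset.sum_le_card_nsmul _ _ _ hle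
          _ = ((univ.erase u \ N u).card : ℝ) * (mu : ℝ) := nsmul_eq_mul _ _
          _ ≤ (k : ℝ) * (mu : ℝ) := by
              have h3 : (univ.erase u \ N u).card ≤ k := by
                calc (univ.erase u \ N u).card ≤ (univ : Finset V).card :=
                      Finset.card_le_card (fun x hx => Finset.mem_univ x)
                _ = k := hk
              have h4 : ((univ.erase u \ N u).card : ℝ) ≤ (k : ℝ) := by exact_mod_cast h3
              nlinarith
          _ ≤ D * L ^ 2 := hkmu
      have hNu : ∑ w ∈ N u, d u w = L * (L - 1) - ∑ w ∈ univ.erase u \ N u, d u w := by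
        rw [← hA, ← hsplit]
        ring
      rw [Finset.sum_sub_distrib, Finset.sum_const, hNcardN u, hNu, nsmul_eq_mul, ← hL_def]
      linarith
    have hcount : ∀ (u : V) (T : ℝ),
        (((N u).filter (fun w => d u w ≤ T)).card : ℝ) * (L - 1 - T) ≤ D * L ^ 2 := by
      intro u T
      have h1 : ∀ w ∈ N u, 0 ≤ L - 1 - d u w := by
        intro w hw
        have := hd_le u w ((hNmem u w).1 hw)
        linarith
      have h2 : (((N u).filter (fun w => d u w ≤ T)).card : ℝ) * (L - 1 - T)
          ≤ ∑ w ∈ (N u).filter (fun w => d u w ≤ T), (L - 1 - d u w) := by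
        rw [← nsmul_eq_mul]
        refine Finset.card_nsmul_le_sum _ _ _ ?_
        intro w hw
        have := (Finset.mem_filter.1 hw).2
        linarith
      have h3 : ∑ w ∈ (N u).filter (fun w => d u w ≤ T), (L - 1 - d u w)
          ≤ ∑ w ∈ N u, (L - 1 - d u w) :=
        Finset.sum_le_sum_of_subset_of_nonneg (Finset.filter_subset _ _)
          (fun w hw _ => h1 w hw)
      linarith [hkey u]
    have hbad : ∀ u : V,
        (((N u).filter (fun w => d u w ≤ (1 - e/16) * L)).card : ℝ) ≤ e/128 * L := by
      intro u
      have h := hcount u ((1 - e/16) * L)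
      have hc0 : (0:ℝ) ≤ (((N u).filter (fun w => d u w ≤ (1 - e/16) * L)).card : ℝ) :=
        Nat.cast_nonneg _
      revert hc0 h
      generalize (((N u).filter (fun w => d u w ≤ (1 - e/16) * L)).card : ℝ) = c
      intro h hc0
      have h2 : c * (e/32 * L) ≤ D * L ^ 2 := by nlinarith
      nlinarith [mul_pos he0 hL0]
    have hlow : ∀ u : V,
        (((N u).filter (fun w => d u w ≤ e/64 * L)).card : ℝ) ≤ e^2/2048 * L := by
      intro u
      have h := hcount u (e/64 * L)
      have hc0 : (0:ℝ) ≤ (((N u).filter (fun w => d u w ≤ e/64 * L)).card : ℝ) :=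
        Nat.cast_nonneg _
      revert hc0 h
      generalize (((N u).filter (fun w => d u w ≤ e/64 * L)).card : ℝ) = c
      intro h hc0
      have h3 : L/2 ≤ L - 1 - e/64 * L := by
        nlinarith [mul_nonneg (sub_nonneg.2 he1) hL0.le]
      have h2 : c * (L/2) ≤ D * L ^ 2 := le_trans (mul_le_mul_of_nonneg_left h3 hc0) h
      nlinarith
    have hinter : ∀ (x : V) (A B : Finset V), A ⊆ N x → B ⊆ N x →
        (A.card : ℝ) + B.card - L ≤ ((A ∩ B).card : ℝ) := by
      intro x A B hA hB
      have h1 : (A ∪ B).card ≤ lam := by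
        calc (A ∪ B).card ≤ (N x).card := Finset.card_le_card (Finset.union_subset hA hB)
        _ = lam := hNcardN x
      have h2 := Finset.card_union_add_card_inter A B
      have h1R : ((A ∪ B).card : ℝ) ≤ L := by rw [hL_def]; exact_mod_cast h1
      have h2R : ((A ∪ B).card : ℝ) + ((A ∩ B).card : ℝ) = (A.card : ℝ) + (B.card : ℝ) := by
        exact_mod_cast h2
      linarith
    -- the dichotomy
    have hdich : ∀ u v, G.Adj u v → d u v ≤ e/64 * L ∨ (1 - e/8) * L ≤ d u v := by
      intro u v huv
      by_cases hx : ∀ x ∈ N u ∩ N v, d u x ≤ (1 - e/16) * L ∨ d v x ≤ (1 - e/16) * L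
      · left
        have hsub : N u ∩ N v ⊆
            ((N u).filter (fun w => d u w ≤ (1 - e/16) * L)) ∪
            ((N v).filter (fun w => d v w ≤ (1 - e/16) * L)) := by
          intro x hxmem
          rcases hx x hxmem with h | h
          · exact Finset.mem_union_left _
              (Finset.mem_filter.2 ⟨(Finset.mem_inter.1 hxmem).1, h⟩)
          · exact Finset.mem_union_right _
              (Finset.mem_filter.2 ⟨(Finset.mem_inter.1 hxmem).2, h⟩)
        have h1 : (N u ∩ N v).card ≤
            ((N u).filter (fun w => d u w ≤ (1 - e/16) * L)).card +
            ((N v).filter (fun w => d v w ≤ (1 - e/16) * L)).card :=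
          le_trans (Finset.card_le_card hsub) (Finset.card_union_le _ _)
        have h1R : d u v ≤
            (((N u).filter (fun w => d u w ≤ (1 - e/16) * L)).card : ℝ) +
            (((N v).filter (fun w => d v w ≤ (1 - e/16) * L)).card : ℝ) := by
          simp only [hd_def]
          exact_mod_cast h1
        have := hbad u
        have := hbad v
        linarith
      · right
        push_neg at hx
        obtain ⟨x, hxm, hux, hvx⟩ := hx
        have h1 := hinter x (N u ∩ N x) (N v ∩ N x)
          Finset.inter_subset_right Finset.inter_subset_right
        have hsub2 : (N u ∩ N x) ∩ (N v ∩ N x) ⊆ N u ∩ N v := by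
          intro z hz
          simp only [Finset.mem_inter] at hz ⊢
          tauto
        have h2 : ((N u ∩ N x) ∩ (N v ∩ N x)).card ≤ (N u ∩ N v).card :=
          Finset.card_le_card hsub2
        have h2R : (((N u ∩ N x) ∩ (N v ∩ N x)).card : ℝ) ≤ d u v := by
          simp only [hd_def]
          exact_mod_cast h2
        have hdu : d u x = ((N u ∩ N x).card : ℝ) := by simp only [hd_def]
        have hdv : d v x = ((N v ∩ N x).card : ℝ) := by simp only [hd_def]
        rw [← hdu, ← hdv] at h1
        linarith
    set good : V → V → Prop := fun u v => G.Adj u v ∧ e/64 * L < d u v with hgood_def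
    have hgood_symm : ∀ {u v}, good u v → good v u := by
      rintro u v ⟨h1, h2⟩
      exact ⟨h1.symm, by rwa [hdsymm v u]⟩
    have hgood_ge : ∀ {u v}, good u v → (1 - e/8) * L ≤ d u v := by
      rintro u v ⟨h1, h2⟩
      rcases hdich u v h1 with h | h
      · linarith
      · exact h
    have htrans : ∀ u v w, good u v → good u w → v ≠ w → good v w := by
      intro u v w h1 h2 hvw
      have g1 := hgood_ge h1
      have g2 := hgood_ge h2
      have h3 := hinter u (N u ∩ N v) (N u ∩ N w)
        Finset.inter_subset_left Finset.inter_subset_left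
      have hsub : (N u ∩ N v) ∩ (N u ∩ N w) ⊆ N v ∩ N w := by
        intro z hz
        simp only [Finset.mem_inter] at hz ⊢
        tauto
      have h4 : (((N u ∩ N v) ∩ (N u ∩ N w)).card : ℝ) ≤ ((N v ∩ N w).card : ℝ) := by
        exact_mod_cast Finset.card_le_card hsub
      have hdu : d u v = ((N u ∩ N v).card : ℝ) := by simp only [hd_def]
      have hdw : d u w = ((N u ∩ N w).card : ℝ) := by simp only [hd_def]
      have hdvw : d v w = ((N v ∩ N w).card : ℝ) := by simp only [hd_def]
      rw [← hdu, ← hdw] at h3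
      have h5 : (1 - e/4) * L ≤ d v w := by
        rw [hdvw]
        nlinarith
      have hadj : G.Adj v w := by
        by_contra hna
        have h6 := hnonadj v w hvw hna
        nlinarith
      refine ⟨hadj, ?_⟩
      nlinarith
    set R : V → V → Prop := fun u v => u = v ∨ good u v with hR_def
    have hRrefl : ∀ u, R u u := fun u => Or.inl rfl
    have hRsymm : ∀ {u v}, R u v → R v u := by
      rintro u v (rfl | h)
      · exact Or.inl rfl
      · exact Or.inr (hgood_symm h)
    have hRtrans : ∀ {u v w}, R u v → R v w → R u w := by
      rintro u v w (rfl | h1) h2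
      · exact h2
      · rcases h2 with rfl | h2
        · exact Or.inr h1
        · rcases eq_or_ne u w with rfl | hne
          · exact Or.inl rfl
          · exact Or.inr (htrans v u w (hgood_symm h1) h2 hne)
    set s : Setoid V := ⟨R, ⟨hRrefl, fun h => hRsymm h, fun h h' => hRtrans h h'⟩⟩ with hs_def
    letI : DecidableRel s.r := fun _ _ => Classical.dec _
    set C : V → Finset V := fun a => univ.filter (fun b => s.r a b) with hC_def
    have hCmem : ∀ a b, b ∈ C a ↔ R a b := by
      intro a b
      rw [hC_def]
      simp only [Finset.mem_filter, Finset.mem_univ, true_and]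
      rfl
    have haC : ∀ a, a ∈ C a := fun a => (hCmem a a).2 (hRrefl a)
    have hparts_iff : ∀ c : Finset V,
        c ∈ (Finpartition.ofSetoid s).parts ↔ ∃ a, C a = c := by
      intro c
      rw [Finpartition.ofSetoid, Finpartition.ofSetSetoid]
      simp only [Finset.mem_image, Finset.mem_univ, true_and]
      rfl
    have hCclique : ∀ a, G.IsClique (C a : Set V) := by
      intro a
      rw [SimpleGraph.isClique_iff]
      intro x hx y hy hxy
      rw [Finset.mem_coe, hCmem] at hx hy
      rcases hRtrans (hRsymm hx) hy with rfl | h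
      · exact absurd rfl hxy
      · exact h.1
    have hCcard_up : ∀ a, ((C a).card : ℝ) ≤ L + 1 := by
      intro a
      have hsub : C a ⊆ insert a (N a) := by
        intro x hx
        rcases (hCmem a x).1 hx with rfl | h
        · exact Finset.mem_insert_self _ _
        · exact Finset.mem_insert_of_mem ((hNmem a x).2 h.1)
      have h1 : (C a).card ≤ lam + 1 := by
        calc (C a).card ≤ (insert a (N a)).card := Finset.card_le_card hsub
        _ ≤ (N a).card + 1 := Finset.card_insert_le _ _
        _ = lam + 1 := by rw [hNcardN a]
      have h2 : ((C a).card : ℝ) ≤ ((lam + 1 : ℕ) : ℝ) := by exact_mod_cast h1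
      rw [hL_def]
      push_cast at h2 ⊢
      linarith
    have hCcard_low : ∀ a, 1 + L - e^2/2048 * L ≤ ((C a).card : ℝ) := by
      intro a
      set S : Finset V := (N a).filter (fun w => d a w ≤ e/64 * L) with hS_def
      have hsub : insert a ((N a) \ S) ⊆ C a := by
        intro x hx
        rcases Finset.mem_insert.1 hx with rfl | hx2
        · exact haC x
        · obtain ⟨hxN, hxS⟩ := Finset.mem_sdiff.1 hx2
          refine (hCmem a x).2 (Or.inr ⟨(hNmem a x).1 hxN, ?_⟩)
          by_contra hcon
          push_neg at hcon
          exact hxS (Finset.mem_filter.2 ⟨hxN, hcon⟩)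
      have hanot : a ∉ (N a) \ S := fun h =>
        G.irrefl ((hNmem a a).1 (Finset.mem_sdiff.1 h).1)
      have hScard : S.card ≤ lam :=
        le_trans (Finset.card_le_card (Finset.filter_subset _ _)) (le_of_eq (hNcardN a))
      have hcard2 : ((N a) \ S).card = lam - S.card := by
        rw [Finset.card_sdiff_of_subset (Finset.filter_subset _ _), hNcardN a]
      have h1 : ((N a) \ S).card + 1 ≤ (C a).card := by
        rw [← Finset.card_insert_of_notMem hanot]
        exact Finset.card_le_card hsub
      have h2 : (((N a) \ S).card : ℝ) = L - (S.card : ℝ) := by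
        rw [hcard2, hL_def]
        push_cast [Nat.cast_sub hScard]
        ring
      have h3 : (S.card : ℝ) ≤ e^2/2048 * L := by
        have := hlow a
        rwa [← hS_def] at this
      have h4 : (((N a) \ S).card : ℝ) + 1 ≤ ((C a).card : ℝ) := by exact_mod_cast h1
      linarith
    have hCmax : ∀ a, IsMaximalClique G (C a) := by
      intro a
      refine ⟨hCclique a, ?_⟩
      intro dd hdd hsubd
      refine Finset.Subset.antisymm hsubd (fun x hx => ?_)
      by_contra hxC
      have hxa : x ≠ a := fun h => hxC (h ▸ haC a)
      have haD : a ∈ dd := hsubd (haC a)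
      have hadj : G.Adj a x :=
        hdd (Finset.mem_coe.2 haD) (Finset.mem_coe.2 hx) (Ne.symm hxa)
      have hsubN : (C a).erase a ⊆ N a ∩ N x := by
        intro w hw
        obtain ⟨hwa, hwC⟩ := Finset.mem_erase.1 hw
        rcases (hCmem a w).1 hwC with rfl | hgw
        · exact absurd rfl hwa
        · refine Finset.mem_inter.2 ⟨(hNmem a w).2 hgw.1, ?_⟩
          have hwx : w ≠ x := fun h => hxC (h ▸ hwC)
          have hadj2 : G.Adj x w :=
            hdd (Finset.mem_coe.2 hx) (Finset.mem_coe.2 (hsubd hwC)) (Ne.symm hwx)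
          exact (hNmem x w).2 hadj2
      have hc1 : 1 ≤ (C a).card := Finset.card_pos.2 ⟨a, haC a⟩
      have hcard3 : ((C a).erase a).card = (C a).card - 1 := Finset.card_erase_of_mem (haC a)
      have h4 : ((C a).card : ℝ) - 1 ≤ d a x := by
        have h5 : ((C a).erase a).card ≤ (N a ∩ N x).card := Finset.card_le_card hsubN
        rw [hcard3] at h5
        have h6 : (((C a).card - 1 : ℕ) : ℝ) = ((C a).card : ℝ) - 1 := by
          push_cast [Nat.cast_sub hc1]
          ring
        have h7 : d a x = ((N a ∩ N x).card : ℝ) := by simp only [hd_def]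
        rw [h7, ← h6]
        exact_mod_cast h5
      have hgood2 : good a x := by
        refine ⟨hadj, ?_⟩
        nlinarith [hCcard_low a, mul_nonneg (sub_nonneg.2 he1) hL0.le,
          mul_nonneg (mul_nonneg he0.le (sub_nonneg.2 he1)) hL0.le]
      exact hxC ((hCmem a x).2 (Or.inr hgood2))
    refine ⟨Finpartition.ofSetoid s, ?_, ?_⟩
    · intro c hc
      obtain ⟨a, rfl⟩ := (hparts_iff c).1 hc
      refine ⟨hCmax a, ?_, ?_⟩
      · have := hCcard_low a
        nlinarith
      · have := hCcard_up a
        nlinarith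
    · intro c hcmax hcparts
      by_contra hbig
      push_neg at hbig
      have hεL : 0 < ε * L := by positivity
      have hc0 : 0 < c.card := by
        by_contra h
        push_neg at h
        rw [Nat.le_zero.mp h] at hbig
        push_cast at hbig
        linarith
      obtain ⟨u, hu⟩ := Finset.card_pos.1 hc0
      have hgoodall : ∀ v ∈ c, v ≠ u → good u v := by
        intro v hv hvu
        have hadj : G.Adj u v :=
          hcmax.1 (Finset.mem_coe.2 hu) (Finset.mem_coe.2 hv) (Ne.symm hvu)
        have hsub : (c.erase u).erase v ⊆ N u ∩ N v := by
          intro w hw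
          obtain ⟨hwv, hw2⟩ := Finset.mem_erase.1 hw
          obtain ⟨hwu, hwc⟩ := Finset.mem_erase.1 hw2
          refine Finset.mem_inter.2 ⟨?_, ?_⟩
          · exact (hNmem u w).2
              (hcmax.1 (Finset.mem_coe.2 hu) (Finset.mem_coe.2 hwc) (Ne.symm hwu))
          · exact (hNmem v w).2
              (hcmax.1 (Finset.mem_coe.2 hv) (Finset.mem_coe.2 hwc) (Ne.symm hwv))
        have hvc : v ∈ c.erase u := Finset.mem_erase.2 ⟨hvu, hv⟩
        have hc2 : 2 ≤ c.card := by
          have h1 : 1 ≤ (c.erase u).card := Finset.card_pos.2 ⟨v, hvc⟩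
          have h2 : (c.erase u).card = c.card - 1 := Finset.card_erase_of_mem hu
          omega
        have hcard4 : ((c.erase u).erase v).card = c.card - 2 := by
          rw [Finset.card_erase_of_mem hvc, Finset.card_erase_of_mem hu]
          omega
        have h5 : ((c.card : ℝ)) - 2 ≤ d u v := by
          have h6 := Finset.card_le_card hsub
          rw [hcard4] at h6
          have h7 : d u v = ((N u ∩ N v).card : ℝ) := by simp only [hd_def]
          have h8 : ((c.card - 2 : ℕ) : ℝ) = (c.card : ℝ) - 2 := by
            push_cast [Nat.cast_sub hc2]
            ring
          rw [h7, ← h8]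
          exact_mod_cast h6
        refine ⟨hadj, ?_⟩
        nlinarith [heL, h5, hbig, mul_nonneg (sub_nonneg.2 heε) hL0.le]
      have hsubC : c ⊆ C u := by
        intro v hv
        rcases eq_or_ne v u with rfl | hne
        · exact haC v
        · exact (hCmem u v).2 (Or.inr (hgoodall v hv hne))
      have hceq : c = C u := hcmax.2 (C u) (hCclique u) hsubC
      exact hcparts ((hparts_iff c).2 ⟨u, hceq.symm⟩)
end

section
/- Let G be a distance-regular graph of diameter at least 2 with degree k, such that adjacent vertices have exactly λ common neighbors with λ ≥ 1, and let s be the least eigenvalue of the real adjacency matrix of G. Then λ + k/λ > k/|s|. -/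
open Finset Matrix

/-- Rayleigh bound: if `s` is below every adjacency eigenvalue, then
`s * (x ⬝ᵥ x) ≤ x ⬝ᵥ (A *ᵥ x)` for every vector `x`. -/
lemma rayleigh_lower_bound {V : Type*} [Fintype V] [DecidableEq V] (G : SimpleGraph V)
    [DecidableRel G.Adj] (s : ℝ) (hmin : ∀ θ : ℝ, IsAdjEigenvalue G θ → s ≤ θ)
    (x : V → ℝ) :
    s * (x ⬝ᵥ x) ≤ x ⬝ᵥ ((G.adjMatrix ℝ) *ᵥ x) := by
  set A := G.adjMatrix ℝ with hAdef
  have hA : A.IsHermitian := by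
    rw [Matrix.IsHermitian]
    ext i j
    simp [A, SimpleGraph.adjMatrix, Matrix.conjTranspose_apply, SimpleGraph.adj_comm]
  set B : Matrix V V ℝ := A - s • 1 with hBdef
  have hB : B.IsHermitian := by
    refine hA.sub ?_
    rw [Matrix.IsHermitian]
    ext i j
    simp [Matrix.conjTranspose_apply, Matrix.one_apply, eq_comm]
  have hnonneg : ∀ i : V, 0 ≤ hB.eigenvalues i := by
    intro i
    have hev : B *ᵥ ⇑(hB.eigenvectorBasis i) = hB.eigenvalues i • ⇑(hB.eigenvectorBasis i) :=
      hB.mulVec_eigenvectorBasis i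
    have hne : (⇑(hB.eigenvectorBasis i) : V → ℝ) ≠ 0 := by
      have h0 := hB.eigenvectorBasis.orthonormal.ne_zero i
      intro hcon
      apply h0
      ext v
      exact congrFun hcon v
    have heig : IsAdjEigenvalue G (hB.eigenvalues i + s) := by
      refine ⟨⇑(hB.eigenvectorBasis i), hne, ?_⟩
      have h2 : A *ᵥ ⇑(hB.eigenvectorBasis i) - s • ⇑(hB.eigenvectorBasis i)
          = hB.eigenvalues i • ⇑(hB.eigenvectorBasis i) := by
        rw [← hev]
        simp [hBdef, Matrix.sub_mulVec, Matrix.smul_mulVec, Matrix.one_mulVec]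
      have h3 := sub_eq_iff_eq_add.mp h2
      rw [h3, add_smul]
    linarith [hmin _ heig]
  have hpsd : B.PosSemidef := hB.posSemidef_iff_eigenvalues_nonneg.mpr (fun i => hnonneg i)
  have h0 := hpsd.dotProduct_mulVec_nonneg x
  have hstar : star x = x := by
    ext v; simp
  rw [hstar] at h0
  have hBx : B *ᵥ x = A *ᵥ x - s • x := by
    rw [hBdef, Matrix.sub_mulVec, Matrix.smul_mulVec, Matrix.one_mulVec]
  rw [hBx, dotProduct_sub, dotProduct_smul, smul_eq_mul] at h0
  linarith

/-- **Lemma**: in a distance-regular graph of diameter at least 2 with degree `k`, parameter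
`λ ≥ 1` and least adjacency eigenvalue `s`, we have `λ + k/λ > k/|s|`. -/
theorem lambda_s_bound {V : Type*} [Fintype V] [DecidableEq V] (G : SimpleGraph V)
    [DecidableRel G.Adj] (b c : ℕ → ℕ) (k lam : ℕ) (s : ℝ)
    (hdrg : IsDistanceRegular G b c) (hdiam : 2 ≤ G.diam)
    (hreg : G.IsRegularOfDegree k)
    (hlam : ∀ u v : V, G.Adj u v → (G.neighborFinset u ∩ G.neighborFinset v).card = lam)
    (hlam1 : 1 ≤ lam)
    (hs : IsAdjEigenvalue G s) (hmin : ∀ θ : ℝ, IsAdjEigenvalue G θ → s ≤ θ) :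
    (lam : ℝ) + (k : ℝ) / (lam : ℝ) > (k : ℝ) / |s| := by
  classical
  obtain ⟨hconn, -⟩ := hdrg
  have hnt : Nontrivial V := G.nontrivial_of_diam_ne_zero (by omega)
  -- `k ≥ 1`
  obtain ⟨u₀, v₀, huv⟩ := exists_pair_ne V
  have hk1 : 1 ≤ k := by
    obtain ⟨w⟩ := hconn.preconnected u₀ v₀
    cases w with
    | nil => exact absurd rfl huv
    | cons h p =>
      have : 0 < G.degree u₀ := G.degree_pos_iff_exists_adj u₀ |>.mpr ⟨_, h⟩
      rw [hreg u₀] at this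
      omega
  set K : ℝ := (k : ℝ) with hKdef
  set L : ℝ := (lam : ℝ) with hLdef
  have hK : (1 : ℝ) ≤ K := by rw [hKdef]; exact_mod_cast hk1
  have hL : (1 : ℝ) ≤ L := by rw [hLdef]; exact_mod_cast hlam1
  have hK0 : (0 : ℝ) < K := by linarith
  have hL0 : (0 : ℝ) < L := by linarith
  set r : ℝ := Real.sqrt (L ^ 2 + 4 * K) with hrdef
  have hr2 : r ^ 2 = L ^ 2 + 4 * K := Real.sq_sqrt (by positivity)
  have hr0 : 0 ≤ r := Real.sqrt_nonneg _
  have hrL : L < r := by nlinarith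
  set m : ℝ := (r - L) / 2 with hmdef
  have hm : 0 < m := by simp only [hmdef]; linarith
  have hmK : m ^ 2 + L * m = K := by
    simp only [hmdef]; nlinarith
  -- the test vector
  set a : ℝ := -K / m with hadef
  set x : V → ℝ := fun w => if w = u₀ then a else if G.Adj u₀ w then 1 else 0 with hxdef
  -- a splitting lemma for sums against `x`
  have key : ∀ f : V → ℝ, ∑ w, x w * f w = a * f u₀ + ∑ w ∈ G.neighborFinset u₀, f w := by
    intro f
    have hpt : ∀ w, x w * f w =
        (if w = u₀ then a * f w else 0) + (if w ∈ G.neighborFinset u₀ then f w else 0) := by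
      intro w
      by_cases h1 : w = u₀
      · subst h1
        have : w ∉ G.neighborFinset w := by simp
        simp [hxdef, this]
      · by_cases h2 : G.Adj u₀ w
        · simp [hxdef, h1, h2, SimpleGraph.mem_neighborFinset]
        · simp [hxdef, h1, h2, SimpleGraph.mem_neighborFinset]
    calc ∑ w, x w * f w
        = ∑ w, ((if w = u₀ then a * f w else 0) + (if w ∈ G.neighborFinset u₀ then f w else 0)) :=
          Finset.sum_congr rfl fun w _ => hpt w
      _ = a * f u₀ + ∑ w ∈ G.neighborFinset u₀, f w := by
          rw [Finset.sum_add_distrib, Finset.sum_ite_eq' univ u₀ (fun w => a * f w),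
            Finset.sum_ite_mem, Finset.univ_inter]
          simp
  -- norm of x
  have hnorm : x ⬝ᵥ x = a ^ 2 + K := by
    have : x ⬝ᵥ x = ∑ w, x w * x w := rfl
    rw [this, key]
    have h1 : x u₀ = a := by simp [hxdef]
    have h2 : ∑ w ∈ G.neighborFinset u₀, x w = K := by
      have : ∀ w ∈ G.neighborFinset u₀, x w = 1 := by
        intro w hw
        rw [SimpleGraph.mem_neighborFinset] at hw
        simp [hxdef, (G.ne_of_adj hw).symm, hw]
      rw [Finset.sum_congr rfl this, Finset.sum_const, nsmul_eq_mul, mul_one,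
        G.card_neighborFinset_eq_degree, hreg u₀]
    rw [h1, h2]; ring
  -- the quadratic form
  have hform : x ⬝ᵥ ((G.adjMatrix ℝ) *ᵥ x) = a * K + K * (a + L) := by
    have hT : ∀ w, ((G.adjMatrix ℝ) *ᵥ x) w = ∑ z ∈ G.neighborFinset w, x z := fun w =>
      G.adjMatrix_mulVec_apply _ _
    have hTu : ∑ z ∈ G.neighborFinset u₀, x z = K := by
      have : ∀ z ∈ G.neighborFinset u₀, x z = 1 := by
        intro z hz
        rw [SimpleGraph.mem_neighborFinset] at hz
        simp [hxdef, (G.ne_of_adj hz).symm, hz]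
      rw [Finset.sum_congr rfl this, Finset.sum_const, nsmul_eq_mul, mul_one,
        G.card_neighborFinset_eq_degree, hreg u₀]
    have hTn : ∀ w ∈ G.neighborFinset u₀, ∑ z ∈ G.neighborFinset w, x z = a + L := by
      intro w hw
      rw [SimpleGraph.mem_neighborFinset] at hw
      have hpt : ∀ z, x z = (if z = u₀ then a else 0) + (if z ∈ G.neighborFinset u₀ then 1 else 0) := by
        intro z
        by_cases h1 : z = u₀
        · subst h1
          have : z ∉ G.neighborFinset z := by simp
          simp [hxdef, this]
        · by_cases h2 : G.Adj u₀ z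
          · simp [hxdef, h1, h2, SimpleGraph.mem_neighborFinset]
          · simp [hxdef, h1, h2, SimpleGraph.mem_neighborFinset]
      calc ∑ z ∈ G.neighborFinset w, x z
          = ∑ z ∈ G.neighborFinset w,
              ((if z = u₀ then a else 0) + (if z ∈ G.neighborFinset u₀ then 1 else 0)) :=
            Finset.sum_congr rfl fun z _ => hpt z
        _ = a + L := by
            rw [Finset.sum_add_distrib, Finset.sum_ite_eq' (G.neighborFinset w) u₀ (fun _ => a),
              Finset.sum_ite_mem]
            have hu₀mem : u₀ ∈ G.neighborFinset w := by
              rw [SimpleGraph.mem_neighborFinset]; exact hw.symm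
            rw [if_pos hu₀mem, Finset.sum_const, nsmul_eq_mul, mul_one,
              hlam w u₀ hw.symm]
    have : x ⬝ᵥ ((G.adjMatrix ℝ) *ᵥ x) = ∑ w, x w * ((G.adjMatrix ℝ) *ᵥ x) w := rfl
    rw [this, key]
    rw [hT u₀, hTu]
    have : ∑ w ∈ G.neighborFinset u₀, ((G.adjMatrix ℝ) *ᵥ x) w = K * (a + L) := by
      have h1 : ∀ w ∈ G.neighborFinset u₀, ((G.adjMatrix ℝ) *ᵥ x) w = a + L := by
        intro w hw; rw [hT w]; exact hTn w hw
      rw [Finset.sum_congr rfl h1, Finset.sum_const, nsmul_eq_mul,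
        G.card_neighborFinset_eq_degree, hreg u₀]
    rw [this]
  -- Rayleigh bound gives `s ≤ -m`
  have hray := rayleigh_lower_bound G s hmin x
  rw [hnorm, hform] at hray
  have ham : a * m = -K := by
    rw [hadef]; field_simp
  have hm' : m ≠ 0 := ne_of_gt hm
  have haval : a = -(m + L) := by
    rw [hadef, ← hmK]; field_simp
  have hRHS : a * K + K * (a + L) = (-m) * (a ^ 2 + K) := by
    rw [haval]; linear_combination (m + L) * hmK
  rw [hRHS] at hray
  have hx2 : 0 < a ^ 2 + K := by positivity
  have hsm : s ≤ -m := le_of_mul_le_mul_right (by linarith) hx2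
  have hsneg : s < 0 := lt_of_le_of_lt hsm (by linarith)
  have habs : |s| = -s := abs_of_neg hsneg
  have habsm : m ≤ |s| := by rw [habs]; linarith
  -- final algebra
  have h1 : K / |s| ≤ K / m := by
    apply div_le_div_of_nonneg_left (le_of_lt hK0) hm habsm
  have h2 : K / m < L + K / L := by
    have hKL : K * L < (L * L + K) * m := by nlinarith [pow_pos hm 3]
    have : K / m < (L * L + K) / L := (div_lt_div_iff₀ hm hL0).mpr hKL
    calc K / m < (L * L + K) / L := this
      _ = L + K / L := by field_simp
  calc K / |s| ≤ K / m := h1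
    _ < L + K / L := h2
end

section
/- Let G be a nontrivial strongly regular graph with parameters (n, k, λ, μ) and distinct adjacency eigenvalues k > r > s, satisfying the claw bound r ≤ max{ 2(−s − 1)(μ + 1 + s) + s, s(s + 1)(μ + 1)/2 − 1 }. Then r < k^{2/3}·(μ + 1)^{1/3}. -/
open Finset

/-- `G` is a disjoint union of cliques: every connected component is a complete graph. -/
def IsDisjointUnionOfCliques {V : Type*} (G : SimpleGraph V) : Prop :=
  ∀ u v : V, G.Reachable u v → u ≠ v → G.Adj u v

/-- A strongly regular graph is *nontrivial* if neither it nor its complement is a disjoint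
union of cliques. -/
def NontrivialSRG {V : Type*} [Fintype V] [DecidableEq V] (G : SimpleGraph V)
    [DecidableRel G.Adj] (n k lam mu : ℕ) : Prop :=
  G.IsSRGWith n k lam mu ∧ ¬ IsDisjointUnionOfCliques G ∧ ¬ IsDisjointUnionOfCliques Gᶜ

lemma srg_eigen_quad {V : Type*} [Fintype V] [DecidableEq V] (G : SimpleGraph V)
    [DecidableRel G.Adj] {n k lam mu : ℕ} (h : G.IsSRGWith n k lam mu) {θ : ℝ}
    (hθ : IsAdjEigenvalue G θ) (hθk : θ ≠ (k:ℝ)) :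
    θ ^ 2 = ((lam : ℝ) - mu) * θ + ((k : ℝ) - mu) := by
  obtain ⟨x, hx0, hx⟩ := hθ
  have hsum : ∑ v, x v = 0 := by
    have h1 : ∑ v, ((G.adjMatrix ℝ).mulVec x) v = (k:ℝ) * ∑ v, x v := by
      simp only [SimpleGraph.adjMatrix_mulVec_apply]
      rw [Finset.sum_comm' (s' := fun u => G.neighborFinset u) (t' := Finset.univ)
        (fun a b => by simp [SimpleGraph.mem_neighborFinset, SimpleGraph.adj_comm])]
      simp only [Finset.sum_const, SimpleGraph.card_neighborFinset_eq_degree, h.regular _,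
        smul_eq_mul, Finset.mul_sum, nsmul_eq_mul]
    rw [hx] at h1
    simp only [Pi.smul_apply, smul_eq_mul, ← Finset.mul_sum] at h1
    by_contra hc
    exact hθk (mul_right_cancel₀ hc h1)
  have hcomp : ∀ v, (Gᶜ.adjMatrix ℝ).mulVec x v = -(1 + θ) * x v := by
    intro v
    rw [SimpleGraph.adjMatrix_mulVec_apply]
    have hset : Gᶜ.neighborFinset v = Finset.univ \ insert v (G.neighborFinset v) := by
      ext u
      simp [SimpleGraph.mem_neighborFinset, SimpleGraph.compl_adj, eq_comm, ne_comm,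
        not_or, and_comm]
    have hNx : ∑ u ∈ G.neighborFinset v, x u = θ * x v := by
      have := congrFun hx v
      rw [SimpleGraph.adjMatrix_mulVec_apply] at this
      simpa using this
    rw [hset, Finset.sum_sdiff_eq_sub (Finset.subset_univ _), hsum,
      Finset.sum_insert (by simp), hNx]
    ring
  obtain ⟨v, hv0⟩ := Function.ne_iff.mp hx0
  have hv : x v ≠ 0 := by simpa using hv0
  have h2 : ((G.adjMatrix ℝ) ^ 2).mulVec x v = θ ^ 2 * x v := by
    rw [pow_two, ← Matrix.mulVec_mulVec, hx, Matrix.mulVec_smul, hx]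
    simp only [Pi.smul_apply, smul_eq_mul]
    ring
  rw [h.matrix_eq] at h2
  have h3 : ((k • (1 : Matrix V V ℝ) + lam • G.adjMatrix ℝ + mu • Gᶜ.adjMatrix ℝ).mulVec x) v
      = (k : ℝ) * x v + (lam : ℝ) * (θ * x v) + (mu : ℝ) * (-(1 + θ) * x v) := by
    simp only [Matrix.add_mulVec, Pi.add_apply]
    congr 1
    · congr 1
      · simp [Matrix.smul_mulVec, Matrix.one_mulVec]
      · rw [Matrix.smul_mulVec, hx]
        simp [mul_comm]
    · rw [Matrix.smul_mulVec]
      simp [hcomp v]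
  rw [h3] at h2
  have := mul_right_cancel₀ hv (by linear_combination -h2 : (θ ^ 2) * x v =
    ((lam : ℝ) * θ - mu * (1 + θ) + k) * x v)
  linear_combination this


set_option maxHeartbeats 1000000 in
/-- **Spielman's bound**: for a nontrivial strongly regular graph with distinct adjacency
eigenvalues `k > r > s` satisfying the claw bound, `r < k^{2/3}(μ+1)^{1/3}`. -/
theorem spielman_r_bound {V : Type*} [Fintype V] [DecidableEq V] (G : SimpleGraph V)
    [DecidableRel G.Adj] (n k lam mu : ℕ) (r s : ℝ)
    (hsrg : NontrivialSRG G n k lam mu)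
    (hr : IsAdjEigenvalue G r) (hs : IsAdjEigenvalue G s)
    (hrk : r < (k : ℝ)) (hsr : s < r)
    (hall : ∀ θ : ℝ, IsAdjEigenvalue G θ → θ = (k : ℝ) ∨ θ = r ∨ θ = s)
    (hclaw : r ≤ max (2 * (-s - 1) * ((mu : ℝ) + 1 + s) + s)
      (s * (s + 1) * ((mu : ℝ) + 1) / 2 - 1)) :
    r < (k : ℝ) ^ ((2 : ℝ) / 3) * ((mu : ℝ) + 1) ^ ((1 : ℝ) / 3) := by
  have hmnn : (0:ℝ) ≤ (mu:ℝ) := Nat.cast_nonneg mu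
  rcases le_or_gt r 0 with hr0 | hr0
  · -- trivial case
    rcases Nat.eq_zero_or_pos k with rfl | hk
    · have hrneg : r < 0 := by exact_mod_cast hrk
      have : ((0:ℕ):ℝ) ^ ((2:ℝ)/3) = 0 := by
        rw [Nat.cast_zero, Real.zero_rpow (by norm_num)]
      rw [this, zero_mul]
      exact hrneg
    · have hk1 : (1:ℝ) ≤ (k:ℝ) := by exact_mod_cast hk
      have h1 : (1:ℝ) ≤ (k:ℝ) ^ ((2:ℝ)/3) := by
        calc (1:ℝ) = (1:ℝ) ^ ((2:ℝ)/3) := (Real.one_rpow _).symm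
        _ ≤ _ := Real.rpow_le_rpow (by norm_num) hk1 (by norm_num)
      have h2 : (1:ℝ) ≤ ((mu:ℝ)+1) ^ ((1:ℝ)/3) := by
        calc (1:ℝ) = (1:ℝ) ^ ((1:ℝ)/3) := (Real.one_rpow _).symm
        _ ≤ _ := Real.rpow_le_rpow (by norm_num) (by linarith) (by norm_num)
      nlinarith [h1, h2]
  · -- main case
    have hk0 : (0:ℝ) < (k:ℝ) := hr0.trans hrk
    have hqr := srg_eigen_quad G hsrg.1 hr (ne_of_lt hrk)
    have hqs := srg_eigen_quad G hsrg.1 hs (ne_of_lt (hsr.trans hrk))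
    have hsum : r + s = (lam:ℝ) - mu := by
      have h1 : (r - s) * (r + s - ((lam:ℝ) - mu)) = 0 := by linear_combination hqr - hqs
      have h2 := (mul_eq_zero.mp h1).resolve_left (sub_ne_zero.mpr hsr.ne')
      linarith [sub_eq_zero.mp h2]
    have hprod : r * s = (mu:ℝ) - k := by linear_combination -hqr + r * hsum
    -- nonadjacent pair exists
    have hnc : ∃ u w : V, u ≠ w ∧ ¬ G.Adj u w := by
      by_contra hcon
      push_neg at hcon
      apply hsrg.2.2
      have hbot : Gᶜ = (⊥ : SimpleGraph V) := by
        ext a b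
        simp only [SimpleGraph.compl_adj, SimpleGraph.bot_adj, iff_false, not_and, not_not]
        exact fun hab => hcon a b hab
      intro u v hreach hne
      rw [hbot] at hreach
      exact absurd (SimpleGraph.reachable_bot.mp hreach) hne
    have hmuk : mu ≤ k := by
      obtain ⟨u, w, hne, hna⟩ := hnc
      calc mu = Fintype.card (G.commonNeighbors u w) := (hsrg.1.of_not_adj hne hna).symm
        _ ≤ G.degree u := SimpleGraph.card_commonNeighbors_le_degree_left G u w
        _ = k := hsrg.1.regular u
    have hs0 : s < 0 := by
      by_contra hcs
      push_neg at hcs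
      have h1 : (k:ℝ) ≤ (mu:ℝ) := by nlinarith [mul_nonneg hr0.le hcs]
      have h2 : mu = k := le_antisymm hmuk (by exact_mod_cast h1)
      apply hsrg.2.2
      have hsub : ∀ u w z : V, u ≠ w → ¬G.Adj u w → G.Adj u z → G.Adj w z := by
        intro u w z hne hna hz
        have hca : Fintype.card (G.commonNeighbors u w) = k := by
          rw [hsrg.1.of_not_adj hne hna, h2]
        have hsubset : (G.commonNeighbors u w).toFinset ⊆ G.neighborFinset u := by
          intro a ha
          rw [Set.mem_toFinset, SimpleGraph.mem_commonNeighbors] at ha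
          rw [SimpleGraph.mem_neighborFinset]
          exact ha.1
        have heq : (G.commonNeighbors u w).toFinset = G.neighborFinset u :=
          Finset.eq_of_subset_of_card_le hsubset (by
            rw [Set.toFinset_card, hca, SimpleGraph.card_neighborFinset_eq_degree,
              hsrg.1.regular u])
        have hzmem : z ∈ (G.commonNeighbors u w).toFinset := by
          rw [heq, SimpleGraph.mem_neighborFinset]
          exact hz
        rw [Set.mem_toFinset, SimpleGraph.mem_commonNeighbors] at hzmem
        exact hzmem.2
      have walkcl : ∀ (a b : V), Gᶜ.Walk a b → a = b ∨ Gᶜ.Adj a b := by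
        intro a b p
        induction p with
        | nil => exact Or.inl rfl
        | @cons a c b hadj p ih =>
          rcases ih with rfl | hcb
          · exact Or.inr hadj
          · rcases eq_or_ne a b with rfl | hab
            · exact Or.inl rfl
            · refine Or.inr ((G.compl_adj a b).mpr ⟨hab, fun hG => ?_⟩)
              have hac := (G.compl_adj a c).mp hadj
              have := hsub a c b hac.1 hac.2 hG
              exact ((G.compl_adj c b).mp hcb).2 this
      intro u v hreach hne
      obtain ⟨p⟩ := hreach
      exact (walkcl u v p).resolve_left hne
    -- key cubic bound
    have hkey : r ^ 3 < (k:ℝ) ^ 2 * ((mu:ℝ) + 1) := by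
      rcases le_max_iff.mp hclaw with hA | hB
      · -- case A
        have hpos : 0 < 2 * (-s - 1) * ((mu:ℝ) + 1 + s) := by linarith
        have ht1 : 1 < -s := by
          by_contra hc
          push_neg at hc
          nlinarith [mul_nonneg (by linarith : (0:ℝ) ≤ s + 1)
            (by linarith : (0:ℝ) ≤ (mu:ℝ) + 1 + s)]
        have ht2 : 0 < (mu:ℝ) + 1 + s := by
          by_contra hc
          push_neg at hc
          nlinarith [mul_nonneg (by linarith : (0:ℝ) ≤ -s - 1)
            (by linarith : (0:ℝ) ≤ -((mu:ℝ) + 1 + s))]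
        have e1 := mul_le_mul_of_nonneg_left hA hr0.le
        have hP : 0 < r * (-s - 1) := mul_pos hr0 (by linarith)
        have e2 : r ^ 2 < 2 * ((k:ℝ) - r) * ((mu:ℝ) + 1) := by
          nlinarith [e1, hprod, hP, mul_nonneg hP.le (by linarith : (0:ℝ) ≤ -s),
            mul_nonneg hmnn (by linarith : (0:ℝ) ≤ (mu:ℝ) + 1)]
        nlinarith [mul_lt_mul_of_pos_left e2 hr0,
          mul_nonneg (sq_nonneg ((k:ℝ) - 2 * r)) (by linarith : (0:ℝ) ≤ (mu:ℝ) + 1),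
          mul_pos (mul_pos hk0 hk0) (by linarith : (0:ℝ) < (mu:ℝ) + 1)]
      · -- case B
        have hB' : r < s ^ 2 * ((mu:ℝ) + 1) / 2 := by
          nlinarith [mul_nonneg (by linarith : (0:ℝ) ≤ -s) (by linarith : (0:ℝ) ≤ (mu:ℝ) + 1)]
        have hkmu : 0 < (k:ℝ) - mu := by
          nlinarith [mul_pos hr0 (by linarith : (0:ℝ) < -s)]
        have hprod2 : (r * s) ^ 2 = ((mu:ℝ) - k) ^ 2 := by rw [hprod]
        have h5 : ((mu:ℝ) - k) ^ 2 * ((mu:ℝ) + 1) ≤ (k:ℝ) ^ 2 * ((mu:ℝ) + 1) := by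
          nlinarith [mul_nonneg (mul_nonneg hmnn (by linarith : (0:ℝ) ≤ 2 * (k:ℝ) - mu))
            (by linarith : (0:ℝ) ≤ (mu:ℝ) + 1)]
        have h6 := mul_lt_mul_of_pos_left hB' (by positivity : (0:ℝ) < r ^ 2)
        nlinarith [h6, hprod2, h5,
          mul_pos (mul_pos hk0 hk0) (by linarith : (0:ℝ) < (mu:ℝ) + 1)]
    -- convert to rpow
    have hRHS : (k:ℝ) ^ ((2:ℝ)/3) * ((mu:ℝ) + 1) ^ ((1:ℝ)/3)
        = ((k:ℝ) ^ 2 * ((mu:ℝ) + 1)) ^ ((1:ℝ)/3) := by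
      rw [Real.mul_rpow (by positivity) (by positivity)]
      congr 1
      rw [← Real.rpow_natCast (k:ℝ) 2, ← Real.rpow_mul hk0.le]
      norm_num
    have hr3 : r = (r ^ 3) ^ ((1:ℝ)/3) := by
      rw [← Real.rpow_natCast r 3, ← Real.rpow_mul hr0.le]
      norm_num
    calc r = (r ^ 3) ^ ((1:ℝ)/3) := hr3
      _ < ((k:ℝ) ^ 2 * ((mu:ℝ) + 1)) ^ ((1:ℝ)/3) :=
          Real.rpow_lt_rpow (by positivity) hkey (by norm_num)
      _ = _ := hRHS.symm
end
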